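/- arXiv:2306.00993 — 11 statements merged into one kernel-verified Lean document; each statement's English description precedes it below -/
import Mathlib

section
/- Quantum degenerate Garnier system G(1,1,1,2), commutativity of the two Hamiltonian flows (Theorem 4.1, case 2): define K1 = q1^3p1^2 + 2q1^2q2p1p2 + q1q2^2p2^2 − t1·q1^2p1^2 − t2·q1q2p2^2 + (α3+α4−h)(q1^2p1 + q1q2p2) + (η + (2h+α1)t1)q1p1 + α2·t2·q1p2 + η·t1·q2p1 + η(1−t2)q2p2 + α3α4·q1 − η·t1·p1, and K2 = t1(q1^2q2p1^2 + q2^3p2^2 + 2q1q2^2p1p2) + t2(t2−1)q1q2p2^2 − t1(2t2·q1q2p1p2 + (t2+1)q2^2p2^2) + (α3+α4−h)t1(q1q2p1 + q2^2p2) + t1t2·q2p2^2 + α2·t1t2·q1p1 + α2·t2(1−t2)q1p2 + η·t1(1−t2)q2p1 + (t1(α1(t2−1) + α2·t2 − α3 − α4 + (2t2−1)h) + η·t2(t2−1))q2p2 + α3α4·t1·q2 − α2·t1t2·p2. Then K1·K2 = K2·K1; i.e. the quantum G(1,1,1,2) Hamiltonians H1 = K1/((h+α1+α2+α3+α4+α5)t1^2)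 and H2 = K2/((h+α1+α2+α3+α4+α5)t2·t1(t2−1)), whose denominators are central, commute. -/
/-!
The central parameters form a commutative coefficient ring (the centre of `R`), over which `R` is an
algebra. Over any commutative ring `C`, using the canonical commutation relations to move every `p`
to the right of every `q` brings `K₁ * K₂` and `K₂ * K₁` to the same normal-ordered polynomial.
-/

namespace QuantumGarnier

theorem exists_algebraMap_center_eq {R : Type*} [Ring R] {c : R} (hc : ∀ r : R, c * r = r * c) :
    ∃ c' : Subring.center R, algebraMap (Subring.center R) R c' = c :=
  ⟨⟨c, Subring.mem_center_iff.mpr fun r => (hc r).symm⟩, rfl⟩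

variable {C R : Type*} [CommRing C] [Ring R] [Algebra C R]

theorem mul_left_comm_of_commutator_eq {ħ : C} {q p : R} (hqp : q * p - p * q = algebraMap C R ħ)
    (z : R) : p * (q * z) = q * (p * z) - ħ • z := by
  rw [← mul_assoc, ← mul_assoc, Algebra.smul_def, ← hqp]
  noncomm_ring

theorem mul_comm_of_commutator_eq {ħ : C} {q p : R} (hqp : q * p - p * q = algebraMap C R ħ) :
    p * q = q * p - ħ • (1 : R) := by
  simpa using mul_left_comm_of_commutator_eq hqp 1

variable (ħ η α1 α2 α3 α4 t1 t2 : C) (q1 p1 q2 p2 : R)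

def K₁ : R :=
  q1^3 * p1^2 + (2 : C) • (q1^2 * q2 * p1 * p2) + q1 * q2^2 * p2^2
    - t1 • (q1^2 * p1^2) - t2 • (q1 * q2 * p2^2)
    + (α3 + α4 - ħ) • (q1^2 * p1 + q1 * q2 * p2)
    + (η + (2 * ħ + α1) * t1) • (q1 * p1)
    + (α2 * t2) • (q1 * p2)
    + (η * t1) • (q2 * p1)
    + (η * (1 - t2)) • (q2 * p2)
    + (α3 * α4) • q1
    - (η * t1) • p1

def K₂ : R :=
  t1 • (q1^2 * q2 * p1^2 + q2^3 * p2^2 + (2 : C) • (q1 * q2^2 * p1 * p2))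
    + (t2 * (t2 - 1)) • (q1 * q2 * p2^2)
    - t1 • ((2 * t2) • (q1 * q2 * p1 * p2) + (t2 + 1) • (q2^2 * p2^2))
    + ((α3 + α4 - ħ) * t1) • (q1 * q2 * p1 + q2^2 * p2)
    + (t1 * t2) • (q2 * p2^2)
    + (α2 * t1 * t2) • (q1 * p1)
    + (α2 * t2 * (1 - t2)) • (q1 * p2)
    + (η * t1 * (1 - t2)) • (q2 * p1)
    + (t1 * (α1 * (t2 - 1) + α2 * t2 - α3 - α4 + (2 * t2 - 1) * ħ) + η * t2 * (t2 - 1)) • (q2 * p2)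
    + (α3 * α4 * t1) • q2
    - (α2 * t1 * t2) • p2

set_option maxHeartbeats 800000 in
variable {ħ η α1 α2 α3 α4 t1 t2 q1 p1 q2 p2} in
theorem commute_K₁_K₂
    (hq1p1 : q1 * p1 - p1 * q1 = algebraMap C R ħ) (hq2p2 : q2 * p2 - p2 * q2 = algebraMap C R ħ)
    (hq : Commute q1 q2) (hp : Commute p1 p2) (hq1p2 : Commute q1 p2) (hq2p1 : Commute q2 p1) :
    Commute (K₁ ħ η α1 α2 α3 α4 t1 t2 q1 p1 q2 p2) (K₂ ħ η α1 α2 α3 α4 t1 t2 q1 p1 q2 p2) := by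
  unfold Commute SemiconjBy K₁ K₂
  simp only [pow_succ, pow_zero, one_mul, mul_one, mul_add, add_mul, mul_sub, sub_mul,
    smul_add, smul_sub, mul_smul_comm, smul_mul_assoc, smul_smul, mul_assoc,
    mul_comm_of_commutator_eq hq1p1, mul_left_comm_of_commutator_eq hq1p1,
    mul_comm_of_commutator_eq hq2p2, mul_left_comm_of_commutator_eq hq2p2,
    hq.symm.eq, hq.symm.left_comm, hp.symm.eq, hp.symm.left_comm,
    hq1p2.symm.eq, hq1p2.symm.left_comm, hq2p1.symm.eq, hq2p1.symm.left_comm]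
  module

end QuantumGarnier

open QuantumGarnier

theorem quantum_garnier_G1112_commute_general
    {R : Type*} [Ring R]
    (h η α1 α2 α3 α4 t1 t2 : R)
    (hh : ∀ r : R, h * r = r * h)
    (hη : ∀ r : R, η * r = r * η)
    (hA1 : ∀ r : R, α1 * r = r * α1)
    (hA2 : ∀ r : R, α2 * r = r * α2)
    (hA3 : ∀ r : R, α3 * r = r * α3)
    (hA4 : ∀ r : R, α4 * r = r * α4)
    (ht1 : ∀ r : R, t1 * r = r * t1)
    (ht2 : ∀ r : R, t2 * r = r * t2)
    (q1 p1 q2 p2 : R)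
    (hq1p1 : q1 * p1 - p1 * q1 = h)
    (hq2p2 : q2 * p2 - p2 * q2 = h)
    (hq1q2 : q1 * q2 - q2 * q1 = 0)
    (hp1p2 : p1 * p2 - p2 * p1 = 0)
    (hq1p2 : q1 * p2 - p2 * q1 = 0)
    (hq2p1 : q2 * p1 - p1 * q2 = 0)
    (K1 K2 : R)
    (hK1 : K1 =
      q1^3 * p1^2 + 2 * q1^2 * q2 * p1 * p2 + q1 * q2^2 * p2^2
      - t1 * q1^2 * p1^2 - t2 * q1 * q2 * p2^2
      + (α3 + α4 - h) * (q1^2 * p1 + q1 * q2 * p2)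
      + (η + (2 * h + α1) * t1) * q1 * p1
      + α2 * t2 * q1 * p2
      + η * t1 * q2 * p1
      + η * (1 - t2) * q2 * p2
      + α3 * α4 * q1
      - η * t1 * p1)
    (hK2 : K2 =
      t1 * (q1^2 * q2 * p1^2 + q2^3 * p2^2 + 2 * q1 * q2^2 * p1 * p2)
      + t2 * (t2 - 1) * q1 * q2 * p2^2
      - t1 * (2 * t2 * q1 * q2 * p1 * p2 + (t2 + 1) * q2^2 * p2^2)
      + (α3 + α4 - h) * t1 * (q1 * q2 * p1 + q2^2 * p2)
      + t1 * t2 * q2 * p2^2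
      + α2 * t1 * t2 * q1 * p1
      + α2 * t2 * (1 - t2) * q1 * p2
      + η * t1 * (1 - t2) * q2 * p1
      + (t1 * (α1 * (t2 - 1) + α2 * t2 - α3 - α4 + (2 * t2 - 1) * h)
          + η * t2 * (t2 - 1)) * q2 * p2
      + α3 * α4 * t1 * q2
      - α2 * t1 * t2 * p2) :
    K1 * K2 = K2 * K1 := by
  obtain ⟨h, rfl⟩ := exists_algebraMap_center_eq hh
  obtain ⟨η, rfl⟩ := exists_algebraMap_center_eq hη
  obtain ⟨α1, rfl⟩ := exists_algebraMap_center_eq hA1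
  obtain ⟨α2, rfl⟩ := exists_algebraMap_center_eq hA2
  obtain ⟨α3, rfl⟩ := exists_algebraMap_center_eq hA3
  obtain ⟨α4, rfl⟩ := exists_algebraMap_center_eq hA4
  obtain ⟨t1, rfl⟩ := exists_algebraMap_center_eq ht1
  obtain ⟨t2, rfl⟩ := exists_algebraMap_center_eq ht2
  have hK1' : K1 = K₁ h η α1 α2 α3 α4 t1 t2 q1 p1 q2 p2 := by
    simp only [hK1, K₁, Algebra.smul_def, map_add, map_sub, map_mul, map_one, map_ofNat]
    noncomm_ring
  have hK2' : K2 = K₂ h η α1 α2 α3 α4 t1 t2 q1 p1 q2 p2 := by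
    simp only [hK2, K₂, Algebra.smul_def, map_add, map_sub, map_mul, map_one, map_ofNat]
    noncomm_ring
  rw [hK1', hK2']
  exact (commute_K₁_K₂ hq1p1 hq2p2 (sub_eq_zero.mp hq1q2) (sub_eq_zero.mp hp1p2)
    (sub_eq_zero.mp hq1p2) (sub_eq_zero.mp hq2p1)).eq

/-- Quantum degenerate Garnier system G(1,1,1,2): commutativity of the two Hamiltonian flows. -/
theorem quantum_garnier_G1112_commute
    {R : Type*} [Ring R]
    (h η α1 α2 α3 α4 α5 t1 t2 : R)
    (hh : ∀ r : R, h * r = r * h)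
    (hη : ∀ r : R, η * r = r * η)
    (hA1 : ∀ r : R, α1 * r = r * α1)
    (hA2 : ∀ r : R, α2 * r = r * α2)
    (hA3 : ∀ r : R, α3 * r = r * α3)
    (hA4 : ∀ r : R, α4 * r = r * α4)
    (hA5 : ∀ r : R, α5 * r = r * α5)
    (ht1 : ∀ r : R, t1 * r = r * t1)
    (ht2 : ∀ r : R, t2 * r = r * t2)
    (q1 p1 q2 p2 : R)
    (hq1p1 : q1 * p1 - p1 * q1 = h)
    (hq2p2 : q2 * p2 - p2 * q2 = h)
    (hq1q2 : q1 * q2 - q2 * q1 = 0)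
    (hp1p2 : p1 * p2 - p2 * p1 = 0)
    (hq1p2 : q1 * p2 - p2 * q1 = 0)
    (hq2p1 : q2 * p1 - p1 * q2 = 0)
    (K1 K2 : R)
    (hK1 : K1 =
      q1^3 * p1^2 + 2 * q1^2 * q2 * p1 * p2 + q1 * q2^2 * p2^2
      - t1 * q1^2 * p1^2 - t2 * q1 * q2 * p2^2
      + (α3 + α4 - h) * (q1^2 * p1 + q1 * q2 * p2)
      + (η + (2 * h + α1) * t1) * q1 * p1
      + α2 * t2 * q1 * p2
      + η * t1 * q2 * p1
      + η * (1 - t2) * q2 * p2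
      + α3 * α4 * q1
      - η * t1 * p1)
    (hK2 : K2 =
      t1 * (q1^2 * q2 * p1^2 + q2^3 * p2^2 + 2 * q1 * q2^2 * p1 * p2)
      + t2 * (t2 - 1) * q1 * q2 * p2^2
      - t1 * (2 * t2 * q1 * q2 * p1 * p2 + (t2 + 1) * q2^2 * p2^2)
      + (α3 + α4 - h) * t1 * (q1 * q2 * p1 + q2^2 * p2)
      + t1 * t2 * q2 * p2^2
      + α2 * t1 * t2 * q1 * p1
      + α2 * t2 * (1 - t2) * q1 * p2
      + η * t1 * (1 - t2) * q2 * p1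
      + (t1 * (α1 * (t2 - 1) + α2 * t2 - α3 - α4 + (2 * t2 - 1) * h)
          + η * t2 * (t2 - 1)) * q2 * p2
      + α3 * α4 * t1 * q2
      - α2 * t1 * t2 * p2) :
    K1 * K2 = K2 * K1 :=
  quantum_garnier_G1112_commute_general h η α1 α2 α3 α4 t1 t2 hh hη hA1 hA2 hA3 hA4 ht1 ht2 q1 p1 q2
    p2 hq1p1 hq2p2 hq1q2 hp1p2 hq1p2 hq2p1 K1 K2 hK1 hK2
end

section
/- Quantum degenerate Garnier system G(1,2,2), commutativity of the two Hamiltonian flows (Theorem 4.1, case 4): define K1 = (t1−t2)q1^2p1^2 + 2t1·q1q2p1p2 − t2·q1^2p1p2 − t1·q2^2p1p2 + (t2−t1)q1^2p1 + ((α1+α2+α3)t1 − (α1+α2)t2)q1p1 − α1·t2·q1p2 − α3·t1·q2p1 + α1·t1·q2p2 − α1(t1−t2)q1 + t1(t1−t2)p1, and K2 = (t1−t2)q2^2p2^2 − 2t2·q1q2p1p2 + t2·q1^2p1p2 + t1·q2^2p1p2 + (t2−t1)q2^2p2 − α3·t2·q1p1 + α1·t2·q1p2 + α3·t1·q2p1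 + ((α2+α3)t1 − (α1+α2+α3)t2)q2p2 − α3(t1−t2)q2 + t2(t1−t2)p2. Then K1·K2 = K2·K1; i.e. the quantum G(1,2,2) Hamiltonians, which are K1 and K2 divided by the central element (2h+α1+α2+α3+2α4) times a central polynomial in t1, t2, commute. -/
/-!
The canonical commutation relations let every word in `q₁, p₁, q₂, p₂` be brought into normal
order (`q₁`, then `q₂`, then `p₁`, then `p₂`), at the price of lower-order words weighted by `ħ`.
The central parameters form a commutative ring over which the whole ring is an algebra, so after
normal ordering both `K₁ K₂` and `K₂ K₁` are linear combinations of ordered monomials with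
commutative coefficients, and these coefficients agree.
-/

section

variable {C R : Type*} [CommRing C] [Ring R] [Algebra C R]

theorem mul_left_comm_of_commutator_eq {ħ : C} {q p : R}
    (hqp : q * p - p * q = algebraMap C R ħ) (z : R) : p * (q * z) = q * (p * z) - ħ • z := by
  rw [Algebra.smul_def, ← hqp]
  noncomm_ring

theorem mul_comm_of_commutator_eq {ħ : C} {q p : R} (hqp : q * p - p * q = algebraMap C R ħ) :
    p * q = q * p - ħ • 1 := by
  simpa using mul_left_comm_of_commutator_eq hqp 1

namespace QuantumGarnierG122

/-- The paper's `K₁`, with the central parameters taken from a commutative ring acting on `R`. -/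
def K1 (α1 α2 α3 t1 t2 : C) (q1 p1 q2 p2 : R) : R :=
  (t1 - t2) • (q1 ^ 2 * p1 ^ 2) + (2 * t1) • (q1 * q2 * p1 * p2)
  - t2 • (q1 ^ 2 * p1 * p2) - t1 • (q2 ^ 2 * p1 * p2)
  + (t2 - t1) • (q1 ^ 2 * p1)
  + ((α1 + α2 + α3) * t1 - (α1 + α2) * t2) • (q1 * p1)
  - (α1 * t2) • (q1 * p2)
  - (α3 * t1) • (q2 * p1)
  + (α1 * t1) • (q2 * p2)
  - (α1 * (t1 - t2)) • q1
  + (t1 * (t1 - t2)) • p1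

def K2 (α1 α2 α3 t1 t2 : C) (q1 p1 q2 p2 : R) : R :=
  (t1 - t2) • (q2 ^ 2 * p2 ^ 2) - (2 * t2) • (q1 * q2 * p1 * p2)
  + t2 • (q1 ^ 2 * p1 * p2) + t1 • (q2 ^ 2 * p1 * p2)
  + (t2 - t1) • (q2 ^ 2 * p2)
  - (α3 * t2) • (q1 * p1)
  + (α1 * t2) • (q1 * p2)
  + (α3 * t1) • (q2 * p1)
  + ((α2 + α3) * t1 - (α1 + α2 + α3) * t2) • (q2 * p2)
  - (α3 * (t1 - t2)) • q2
  + (t2 * (t1 - t2)) • p2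

theorem commute_K1_K2 {ħ : C} (α1 α2 α3 t1 t2 : C) {q1 p1 q2 p2 : R}
    (hq1p1 : q1 * p1 - p1 * q1 = algebraMap C R ħ)
    (hq2p2 : q2 * p2 - p2 * q2 = algebraMap C R ħ)
    (hq1q2 : Commute q1 q2) (hp1p2 : Commute p1 p2)
    (hq1p2 : Commute q1 p2) (hq2p1 : Commute q2 p1) :
    Commute (K1 α1 α2 α3 t1 t2 q1 p1 q2 p2) (K2 α1 α2 α3 t1 t2 q1 p1 q2 p2) := by
  unfold Commute SemiconjBy K1 K2
  -- normal ordering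
  simp only [pow_two, mul_assoc, mul_add, add_mul, mul_sub, sub_mul, smul_mul_assoc,
    mul_smul_comm, smul_add, smul_sub, smul_smul, mul_one,
    mul_left_comm_of_commutator_eq hq1p1, mul_left_comm_of_commutator_eq hq2p2,
    mul_comm_of_commutator_eq hq1p1, mul_comm_of_commutator_eq hq2p2,
    hq1q2.eq.symm, hq1q2.symm.left_comm, hp1p2.eq.symm, hp1p2.symm.left_comm,
    hq1p2.eq.symm, hq1p2.symm.left_comm, hq2p1.eq.symm, hq2p1.symm.left_comm]
  module

end QuantumGarnierG122

end

theorem quantum_garnier_G122_commute_general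
    {R : Type*} [Ring R]
    (h α1 α2 α3 t1 t2 : R)
    (hh : ∀ r : R, h * r = r * h)
    (hA1 : ∀ r : R, α1 * r = r * α1)
    (hA2 : ∀ r : R, α2 * r = r * α2)
    (hA3 : ∀ r : R, α3 * r = r * α3)
    (ht1 : ∀ r : R, t1 * r = r * t1)
    (ht2 : ∀ r : R, t2 * r = r * t2)
    (q1 p1 q2 p2 : R)
    (hq1p1 : q1 * p1 - p1 * q1 = h)
    (hq2p2 : q2 * p2 - p2 * q2 = h)
    (hq1q2 : q1 * q2 - q2 * q1 = 0)
    (hp1p2 : p1 * p2 - p2 * p1 = 0)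
    (hq1p2 : q1 * p2 - p2 * q1 = 0)
    (hq2p1 : q2 * p1 - p1 * q2 = 0)
    (K1 K2 : R)
    (hK1 : K1 =
      (t1 - t2) * q1^2 * p1^2 + 2 * t1 * q1 * q2 * p1 * p2
      - t2 * q1^2 * p1 * p2 - t1 * q2^2 * p1 * p2
      + (t2 - t1) * q1^2 * p1
      + ((α1 + α2 + α3) * t1 - (α1 + α2) * t2) * q1 * p1
      - α1 * t2 * q1 * p2
      - α3 * t1 * q2 * p1
      + α1 * t1 * q2 * p2
      - α1 * (t1 - t2) * q1
      + t1 * (t1 - t2) * p1)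
    (hK2 : K2 =
      (t1 - t2) * q2^2 * p2^2 - 2 * t2 * q1 * q2 * p1 * p2
      + t2 * q1^2 * p1 * p2 + t1 * q2^2 * p1 * p2
      + (t2 - t1) * q2^2 * p2
      - α3 * t2 * q1 * p1
      + α1 * t2 * q1 * p2
      + α3 * t1 * q2 * p1
      + ((α2 + α3) * t1 - (α1 + α2 + α3) * t2) * q2 * p2
      - α3 * (t1 - t2) * q2
      + t2 * (t1 - t2) * p2) :
    K1 * K2 = K2 * K1 := by
  have central {x : R} (hx : ∀ r, x * r = r * x) : x ∈ Subring.center R :=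
    Subring.mem_center_iff.2 fun g => (hx g).symm
  have key := QuantumGarnierG122.commute_K1_K2 (C := Subring.center R) (ħ := ⟨h, central hh⟩)
    ⟨α1, central hA1⟩ ⟨α2, central hA2⟩ ⟨α3, central hA3⟩ ⟨t1, central ht1⟩ ⟨t2, central ht2⟩
    hq1p1 hq2p2 (sub_eq_zero.1 hq1q2) (sub_eq_zero.1 hp1p2) (sub_eq_zero.1 hq1p2)
    (sub_eq_zero.1 hq2p1)
  convert key.eq using 2 <;>
    simp only [hK1, hK2, QuantumGarnierG122.K1, QuantumGarnierG122.K2, Algebra.smul_def,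
      map_sub, map_add, map_mul, map_ofNat, mul_assoc] <;>
    -- `algebraMap (Subring.center R) R` is `Subtype.val`
    rfl

/-- Quantum degenerate Garnier system G(1,2,2): commutativity of the two Hamiltonian flows. -/
theorem quantum_garnier_G122_commute
    {R : Type*} [Ring R]
    (h α1 α2 α3 α4 t1 t2 : R)
    (hh : ∀ r : R, h * r = r * h)
    (hA1 : ∀ r : R, α1 * r = r * α1)
    (hA2 : ∀ r : R, α2 * r = r * α2)
    (hA3 : ∀ r : R, α3 * r = r * α3)
    (hA4 : ∀ r : R, α4 * r = r * α4)
    (ht1 : ∀ r : R, t1 * r = r * t1)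
    (ht2 : ∀ r : R, t2 * r = r * t2)
    (q1 p1 q2 p2 : R)
    (hq1p1 : q1 * p1 - p1 * q1 = h)
    (hq2p2 : q2 * p2 - p2 * q2 = h)
    (hq1q2 : q1 * q2 - q2 * q1 = 0)
    (hp1p2 : p1 * p2 - p2 * p1 = 0)
    (hq1p2 : q1 * p2 - p2 * q1 = 0)
    (hq2p1 : q2 * p1 - p1 * q2 = 0)
    (K1 K2 : R)
    (hK1 : K1 =
      (t1 - t2) * q1^2 * p1^2 + 2 * t1 * q1 * q2 * p1 * p2
      - t2 * q1^2 * p1 * p2 - t1 * q2^2 * p1 * p2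
      + (t2 - t1) * q1^2 * p1
      + ((α1 + α2 + α3) * t1 - (α1 + α2) * t2) * q1 * p1
      - α1 * t2 * q1 * p2
      - α3 * t1 * q2 * p1
      + α1 * t1 * q2 * p2
      - α1 * (t1 - t2) * q1
      + t1 * (t1 - t2) * p1)
    (hK2 : K2 =
      (t1 - t2) * q2^2 * p2^2 - 2 * t2 * q1 * q2 * p1 * p2
      + t2 * q1^2 * p1 * p2 + t1 * q2^2 * p1 * p2
      + (t2 - t1) * q2^2 * p2
      - α3 * t2 * q1 * p1
      + α1 * t2 * q1 * p2
      + α3 * t1 * q2 * p1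
      + ((α2 + α3) * t1 - (α1 + α2 + α3) * t2) * q2 * p2
      - α3 * (t1 - t2) * q2
      + t2 * (t1 - t2) * p2) :
    K1 * K2 = K2 * K1 :=
  quantum_garnier_G122_commute_general h α1 α2 α3 t1 t2 hh hA1 hA2 hA3 ht1 ht2 q1 p1 q2 p2 hq1p1
    hq2p2 hq1q2 hp1p2 hq1p2 hq2p1 K1 K2 hK1 hK2
end

section
/- Quantum degenerate Garnier system G(5), commutativity of the two Hamiltonian flows (Theorem 4.1, case 7): define K1 = 2q1q2p1 + q2p1^2 + 2q2^2p2 − 2q1p2 + 2t2·q2p1 + 2p1p2 + 2α1·q2 + 2t1·p1 + 2t2·p2, and K2 = q2^2p1^2 + 2q1^2p1 + 2q1q2p2 − q1p1^2 + 2q2p1p2 + 2t1·q2p1 + 2t2·q2p2 − t2·p1^2 + p2^2 + 2α1·q1 − 2t2^2·p1 + 2t1·p2. Then K1·K2 = K2·K1; i.e. the quantum G(5) Hamiltonians H1 = K1/(3h+2α1−2α2) and H2 = K2/(3h+2α1−2α2), whose denominator is central, commute. -/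
/-!
The central parameters `h, α1, t1, t2` lie in the centre `Z` of `R`, so `R` is a `Z`-algebra and
`K1`, `K2` are `Z`-linear combinations of words in `q1, p1, q2, p2`. Normal-ordering both products
`K1 * K2` and `K2 * K1` (every `q` to the left of every `p`, using `p * q = q * p - h` for a
conjugate pair) expresses them as `Z`-combinations of ordered monomials, and the coefficients agree.
-/

theorem mul_mul_eq_mul_mul_sub_of_sub_eq {R : Type*} [Ring R] {a b c : R} (h : a * b - b * a = c)
    (x : R) : b * (a * x) = a * (b * x) - c * x := by
  rw [← mul_assoc, ← mul_assoc, ← sub_mul, ← h, sub_sub_cancel]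

namespace GarnierG5

variable {Z R : Type*} [CommRing Z] [Ring R] [Algebra Z R]

def K1 (α1 t1 t2 : Z) (q1 p1 q2 p2 : R) : R :=
  (2 : Z) • (q1 * q2 * p1) + q2 * p1 ^ 2 + (2 : Z) • (q2 ^ 2 * p2) - (2 : Z) • (q1 * p2)
    + (2 * t2) • (q2 * p1) + (2 : Z) • (p1 * p2) + (2 * α1) • q2 + (2 * t1) • p1 + (2 * t2) • p2

def K2 (α1 t1 t2 : Z) (q1 p1 q2 p2 : R) : R :=
  q2 ^ 2 * p1 ^ 2 + (2 : Z) • (q1 ^ 2 * p1) + (2 : Z) • (q1 * q2 * p2) - q1 * p1 ^ 2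
    + (2 : Z) • (q2 * p1 * p2) + (2 * t1) • (q2 * p1) + (2 * t2) • (q2 * p2)
    - t2 • p1 ^ 2 + p2 ^ 2 + (2 * α1) • q1 - (2 * t2 ^ 2) • p1 + (2 * t1) • p2

theorem commute_K1_K2 {ħ : Z} (α1 t1 t2 : Z) {q1 p1 q2 p2 : R}
    (h11 : q1 * p1 - p1 * q1 = algebraMap Z R ħ) (h22 : q2 * p2 - p2 * q2 = algebraMap Z R ħ)
    (hqq : Commute q1 q2) (hpp : Commute p1 p2) (hqp : Commute q1 p2) (hpq : Commute q2 p1) :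
    Commute (K1 α1 t1 t2 q1 p1 q2 p2) (K2 α1 t1 t2 q1 p1 q2 p2) := by
  have swap11 := mul_mul_eq_mul_mul_sub_of_sub_eq h11
  have swap22 := mul_mul_eq_mul_mul_sub_of_sub_eq h22
  have swap11' : p1 * q1 = q1 * p1 - algebraMap Z R ħ := by rw [← h11, sub_sub_cancel]
  have swap22' : p2 * q2 = q2 * p2 - algebraMap Z R ħ := by rw [← h22, sub_sub_cancel]
  simp only [Commute, SemiconjBy, K1, K2, pow_two, mul_add, add_mul, mul_sub, sub_mul,
    smul_mul_assoc, mul_smul_comm, mul_assoc, smul_add, smul_sub, smul_smul, one_mul, mul_one,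
    swap11, swap22, swap11', swap22', Algebra.algebraMap_eq_smul_one,
    hqq.symm.eq, hqq.symm.left_comm, hpp.symm.eq, hpp.symm.left_comm,
    hqp.symm.eq, hqp.symm.left_comm, hpq.symm.eq, hpq.symm.left_comm]
  module

end GarnierG5

theorem quantum_garnier_G5_commute_general
    {R : Type*} [Ring R]
    (h α1 t1 t2 : R)
    (hh : ∀ r : R, h * r = r * h)
    (hA1 : ∀ r : R, α1 * r = r * α1)
    (ht1 : ∀ r : R, t1 * r = r * t1)
    (ht2 : ∀ r : R, t2 * r = r * t2)
    (q1 p1 q2 p2 : R)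
    (hq1p1 : q1 * p1 - p1 * q1 = h)
    (hq2p2 : q2 * p2 - p2 * q2 = h)
    (hq1q2 : q1 * q2 - q2 * q1 = 0)
    (hp1p2 : p1 * p2 - p2 * p1 = 0)
    (hq1p2 : q1 * p2 - p2 * q1 = 0)
    (hq2p1 : q2 * p1 - p1 * q2 = 0)
    (K1 K2 : R)
    (hK1 : K1 =
      2 * q1 * q2 * p1 + q2 * p1^2 + 2 * q2^2 * p2 - 2 * q1 * p2
      + 2 * t2 * q2 * p1 + 2 * p1 * p2 + 2 * α1 * q2 + 2 * t1 * p1 + 2 * t2 * p2)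
    (hK2 : K2 =
      q2^2 * p1^2 + 2 * q1^2 * p1 + 2 * q1 * q2 * p2 - q1 * p1^2
      + 2 * q2 * p1 * p2 + 2 * t1 * q2 * p1 + 2 * t2 * q2 * p2
      - t2 * p1^2 + p2^2 + 2 * α1 * q1 - 2 * t2^2 * p1 + 2 * t1 * p2) :
    K1 * K2 = K2 * K1 := by
  have central {c : R} (hc : ∀ r : R, c * r = r * c) : c ∈ Subring.center R :=
    Subring.mem_center_iff.mpr fun r => (hc r).symm
  lift h to Subring.center R using central hh
  lift α1 to Subring.center R using central hA1
  lift t1 to Subring.center R using central ht1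
  lift t2 to Subring.center R using central ht2
  have hK1' : K1 = GarnierG5.K1 α1 t1 t2 q1 p1 q2 p2 := by
    simp only [hK1, GarnierG5.K1, Algebra.smul_def, map_mul, map_ofNat, mul_assoc]
    rfl
  have hK2' : K2 = GarnierG5.K2 α1 t1 t2 q1 p1 q2 p2 := by
    simp only [hK2, GarnierG5.K2, Algebra.smul_def, map_mul, map_ofNat, mul_assoc]
    rfl
  rw [hK1', hK2']
  exact GarnierG5.commute_K1_K2 α1 t1 t2 hq1p1 hq2p2 (sub_eq_zero.mp hq1q2)
    (sub_eq_zero.mp hp1p2) (sub_eq_zero.mp hq1p2) (sub_eq_zero.mp hq2p1)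

/-- Quantum degenerate Garnier system G(5): commutativity of the two Hamiltonian flows. -/
theorem quantum_garnier_G5_commute
    {R : Type*} [Ring R]
    (h α1 α2 t1 t2 : R)
    (hh : ∀ r : R, h * r = r * h)
    (hA1 : ∀ r : R, α1 * r = r * α1)
    (hA2 : ∀ r : R, α2 * r = r * α2)
    (ht1 : ∀ r : R, t1 * r = r * t1)
    (ht2 : ∀ r : R, t2 * r = r * t2)
    (q1 p1 q2 p2 : R)
    (hq1p1 : q1 * p1 - p1 * q1 = h)
    (hq2p2 : q2 * p2 - p2 * q2 = h)
    (hq1q2 : q1 * q2 - q2 * q1 = 0)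
    (hp1p2 : p1 * p2 - p2 * p1 = 0)
    (hq1p2 : q1 * p2 - p2 * q1 = 0)
    (hq2p1 : q2 * p1 - p1 * q2 = 0)
    (K1 K2 : R)
    (hK1 : K1 =
      2 * q1 * q2 * p1 + q2 * p1^2 + 2 * q2^2 * p2 - 2 * q1 * p2
      + 2 * t2 * q2 * p1 + 2 * p1 * p2 + 2 * α1 * q2 + 2 * t1 * p1 + 2 * t2 * p2)
    (hK2 : K2 =
      q2^2 * p1^2 + 2 * q1^2 * p1 + 2 * q1 * q2 * p2 - q1 * p1^2
      + 2 * q2 * p1 * p2 + 2 * t1 * q2 * p1 + 2 * t2 * q2 * p2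
      - t2 * p1^2 + p2^2 + 2 * α1 * q1 - 2 * t2^2 * p1 + 2 * t1 * p2) :
    K1 * K2 = K2 * K1 :=
  quantum_garnier_G5_commute_general h α1 t1 t2 hh hA1 ht1 ht2 q1 p1 q2 p2 hq1p1 hq2p2 hq1q2 hp1p2
    hq1p2 hq2p1 K1 K2 hK1 hK2
end

section
/- The transformation r1 of the quantum Garnier system G(1,1,1,1,1) is a quantum canonical transformation: suppose x1 is a unit of R, and define q1 = x1^{-1}, p1 = −x1^2y1 − x1x2y2 − α1·x1, q2 = x2x1^{-1}, p2 = x1y2. Then (q1, p1, q2, p2) again satisfy the canonical commutation relations: [q1,p1] = [q2,p2] = h and [q1,q2] = [p1,p2] = [q1,p2] = [q2,p1] = 0. -/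
/-!
The key element is `E = x₁ y₁ + x₂ y₂`: since `⁅E, xᵢ⁆ = -h xᵢ` and `⁅E, yᵢ⁆ = h yᵢ`, the
coordinates `q₂ = x₂ x₁⁻¹` and `p₂ = x₁ y₂` have weight `0` for `ad E`, i.e. commute with `E`,
while `q₁ = x₁⁻¹` has weight `h`. Writing `p₁ = -x₁ (E + α₁)`, the Leibniz rule reduces every
bracket of the new coordinates to brackets among `x₁, x₁⁻¹, x₂, y₂` and `E`.
-/

section

attribute [local instance] LieRing.ofAssociativeRing

variable {R : Type*} [Ring R]

namespace Ring

theorem lie_mul (a b c : R) : ⁅a, b * c⁆ = ⁅a, b⁆ * c + b * ⁅a, c⁆ := by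
  simp only [lie_def]; noncomm_ring

theorem mul_lie (a b c : R) : ⁅a * b, c⁆ = a * ⁅b, c⁆ + ⁅a, c⁆ * b := by
  simp only [lie_def]; noncomm_ring

theorem lie_units_inv (a : R) (u : Rˣ) : ⁅a, (↑u⁻¹ : R)⁆ = -(↑u⁻¹ * ⁅a, (u : R)⁆ * ↑u⁻¹) := by
  simp only [lie_def, mul_sub, sub_mul, mul_assoc, Units.mul_inv, mul_one,
    Units.inv_mul_cancel_left]
  noncomm_ring

end Ring

section Weights

variable {e w : R}

theorem lie_mul_eq_of_lie_eq {a b v : R} (ha : ⁅e, a⁆ = v * a) (hb : ⁅e, b⁆ = w * b)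
    (hwa : Commute w a) : ⁅e, a * b⁆ = (v + w) * (a * b) := by
  rw [Ring.lie_mul, ha, hb, ← mul_assoc, ← hwa.eq]
  noncomm_ring

theorem lie_units_inv_eq_of_lie_eq {u : Rˣ} (hu : ⁅e, (u : R)⁆ = w * u) (hwu : Commute w u) :
    ⁅e, (↑u⁻¹ : R)⁆ = -w * ↑u⁻¹ := by
  rw [Ring.lie_units_inv, hu, hwu.eq, Units.inv_mul_cancel_left, neg_mul]

end Weights

structure IsCCR (h x₁ y₁ x₂ y₂ : R) : Prop where
  lie_x₁_y₁ : ⁅x₁, y₁⁆ = h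
  lie_x₂_y₂ : ⁅x₂, y₂⁆ = h
  commute_x₁_x₂ : Commute x₁ x₂
  commute_y₁_y₂ : Commute y₁ y₂
  commute_x₁_y₂ : Commute x₁ y₂
  commute_x₂_y₁ : Commute x₂ y₁

namespace IsCCR

def euler (x₁ y₁ x₂ y₂ : R) : R := x₁ * y₁ + x₂ * y₂

variable {h x₁ y₁ x₂ y₂ : R}

theorem lie_euler_x₁ (H : IsCCR h x₁ y₁ x₂ y₂) (hh : ∀ r, Commute h r) :
    ⁅euler x₁ y₁ x₂ y₂, x₁⁆ = -h * x₁ := by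
  rw [euler, add_lie, Ring.mul_lie, Ring.mul_lie, ← lie_skew y₁ x₁, H.lie_x₁_y₁, lie_self,
    H.commute_x₁_y₂.symm.lie_eq, H.commute_x₁_x₂.symm.lie_eq]
  simp [(hh x₁).eq]

theorem lie_euler_x₂ (H : IsCCR h x₁ y₁ x₂ y₂) (hh : ∀ r, Commute h r) :
    ⁅euler x₁ y₁ x₂ y₂, x₂⁆ = -h * x₂ := by
  rw [euler, add_lie, Ring.mul_lie, Ring.mul_lie, ← lie_skew y₂ x₂, H.lie_x₂_y₂, lie_self,
    H.commute_x₂_y₁.symm.lie_eq, H.commute_x₁_x₂.lie_eq]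
  simp [(hh x₂).eq]

theorem lie_euler_y₂ (H : IsCCR h x₁ y₁ x₂ y₂) : ⁅euler x₁ y₁ x₂ y₂, y₂⁆ = h * y₂ := by
  rw [euler, add_lie, Ring.mul_lie, Ring.mul_lie, H.lie_x₂_y₂, lie_self,
    H.commute_y₁_y₂.lie_eq, H.commute_x₁_y₂.lie_eq]
  noncomm_ring

theorem garnier_r1 {h y₁ x₂ y₂ α : R} {u : Rˣ} (H : IsCCR h u y₁ x₂ y₂) (hh : ∀ r, Commute h r)
    (hα : ∀ r, Commute α r) :
    IsCCR h ↑u⁻¹ (-(↑u * (euler ↑u y₁ x₂ y₂ + α))) (x₂ * ↑u⁻¹) (↑u * y₂) := by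
  set E := euler (u : R) y₁ x₂ y₂
  have hu_inv_u : Commute (↑u⁻¹ : R) u := (Commute.refl _).units_inv_left
  have hu_inv_p₂ : Commute (↑u⁻¹ : R) (↑u * y₂) :=
    hu_inv_u.mul_right H.commute_x₁_y₂.units_inv_left
  have hE_u_inv : ⁅E, (↑u⁻¹ : R)⁆ = h * ↑u⁻¹ := by
    simpa using lie_units_inv_eq_of_lie_eq (H.lie_euler_x₁ hh) (hh _).neg_left
  have hE_q₂ : Commute E (x₂ * ↑u⁻¹) := commute_iff_lie_eq.2 <| by
    rw [lie_mul_eq_of_lie_eq (H.lie_euler_x₂ hh) hE_u_inv (hh x₂), neg_add_cancel, zero_mul]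
  have hE_p₂ : Commute E (↑u * y₂) := commute_iff_lie_eq.2 <| by
    rw [lie_mul_eq_of_lie_eq (H.lie_euler_x₁ hh) H.lie_euler_y₂ (hh _), neg_add_cancel, zero_mul]
  refine ⟨?_, ?_, ?_, ?_, hu_inv_p₂, ?_⟩
  · rw [lie_neg, Ring.lie_mul, hu_inv_u.lie_eq, lie_add, (hα _).symm.lie_eq,
      ← lie_skew (↑u⁻¹ : R) E, hE_u_inv]
    simp [← mul_assoc, ← (hh _).eq]
  · rw [Ring.mul_lie, hu_inv_p₂.lie_eq, Ring.lie_mul, H.commute_x₁_x₂.symm.lie_eq, H.lie_x₂_y₂]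
    simp [← (hh _).eq]
  · exact H.commute_x₁_x₂.units_inv_left.mul_right (Commute.refl _)
  · exact (((Commute.refl _).mul_right H.commute_x₁_y₂).mul_left
      (hE_p₂.add_left (hα _))).neg_left
  · exact ((H.commute_x₁_x₂.symm.mul_left hu_inv_u).mul_right
      (hE_q₂.symm.add_right (hα _).symm)).neg_right

end IsCCR

end

/-- The transformation r1 of the quantum Garnier system G(1,1,1,1,1) is a quantum
canonical transformation. -/
theorem quantum_garnier_G11111_r1_canonical
    {R : Type*} [Ring R]
    (h α1 : R)
    (hh : ∀ r : R, h * r = r * h)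
    (hA1 : ∀ r : R, α1 * r = r * α1)
    (x1 y1 x2 y2 : R)
    (hx1y1 : x1 * y1 - y1 * x1 = h)
    (hx2y2 : x2 * y2 - y2 * x2 = h)
    (hx1x2 : x1 * x2 - x2 * x1 = 0)
    (hy1y2 : y1 * y2 - y2 * y1 = 0)
    (hx1y2 : x1 * y2 - y2 * x1 = 0)
    (hx2y1 : x2 * y1 - y1 * x2 = 0)
    (x1i : R) (hx1il : x1i * x1 = 1) (hx1ir : x1 * x1i = 1)
    (q1 p1 q2 p2 : R)
    (hq1 : q1 = x1i)
    (hp1 : p1 = -(x1^2 * y1) - x1 * x2 * y2 - α1 * x1)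
    (hq2 : q2 = x2 * x1i)
    (hp2 : p2 = x1 * y2) :
    q1 * p1 - p1 * q1 = h ∧ q2 * p2 - p2 * q2 = h ∧
    q1 * q2 - q2 * q1 = 0 ∧ p1 * p2 - p2 * p1 = 0 ∧
    q1 * p2 - p2 * q1 = 0 ∧ q2 * p1 - p1 * q2 = 0 := by
  let u : Rˣ := ⟨x1, x1i, hx1ir, hx1il⟩
  have H : IsCCR h (u : R) y1 x2 y2 :=
    ⟨hx1y1, hx2y2, commute_iff_lie_eq.2 hx1x2, commute_iff_lie_eq.2 hy1y2,
      commute_iff_lie_eq.2 hx1y2, commute_iff_lie_eq.2 hx2y1⟩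
  have hp1' : p1 = -(x1 * (IsCCR.euler x1 y1 x2 y2 + α1)) := by
    rw [hp1, IsCCR.euler, hA1 x1]
    noncomm_ring
  obtain ⟨hq1p1, hq2p2, hq1q2, hp1p2, hq1p2, hq2p1⟩ := H.garnier_r1 hh hA1
  subst hq1 hq2 hp2 hp1'
  exact ⟨hq1p1, hq2p2, hq1q2.lie_eq, hp1p2.lie_eq, hq1p2.lie_eq, hq2p1.lie_eq⟩
end

section
/- The transformation r3 of the quantum Garnier system G(1,1,1,1,1) is a quantum canonical transformation: suppose y1 is a unit of R, and define q1 = −x1y1^2 + α3·y1, p1 = y1^{-1}, q2 = x2, p2 = y2. Then (q1, p1, q2, p2) again satisfy the canonical commutation relations: [q1,p1] = [q2,p2] = h and [q1,q2] = [p1,p2] = [q1,p2] = [q2,p1] = 0. -/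
/-! The only nontrivial bracket is `[q₁, p₁]`. From `x y = y x + h` one gets
`x y² = y (x y + h)`, so conjugating by `y⁻¹` gives `y⁻¹ (x y²) = x y + h`, while
`(x y²) y⁻¹ = x y`; the `α₃ y` part commutes with `y⁻¹` on both sides. The remaining brackets
vanish because `x₂` and `y₂` commute with `x₁`, `y₁`, `α₃`, hence with `q₁` and `y₁⁻¹`. -/

section CanonicalR3

variable {R : Type*} [Ring R] {h a x y : R}

lemma inv_mul_mul_sq_of_sub_eq (u : Rˣ) (hxu : x * u - u * x = h) (hhu : Commute h u) :
    ↑u⁻¹ * (x * u ^ 2) = x * u + h := by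
  have hx : x * u = u * x + h := eq_add_of_sub_eq' hxu
  have hsq : x * u ^ 2 = u * (x * u + h) := by
    rw [sq, ← mul_assoc, hx, add_mul, hhu.eq, mul_assoc, ← mul_add, ← hx]
  rw [hsq, Units.inv_mul_cancel_left]

lemma sub_mul_sq_add_mul_commutator_inv (u : Rˣ) (hxu : x * u - u * x = h)
    (hhu : Commute h u) (hau : Commute a u) :
    (-(x * u ^ 2) + a * u) * ↑u⁻¹ - ↑u⁻¹ * (-(x * u ^ 2) + a * u) = h := by
  have hright : x * u ^ 2 * ↑u⁻¹ = x * u := by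
    rw [sq, ← mul_assoc, Units.mul_inv_cancel_right]
  have hleft : ↑u⁻¹ * (a * u) = a := by
    rw [hau.eq, Units.inv_mul_cancel_left]
  rw [add_mul, mul_add, neg_mul, mul_neg, hright, inv_mul_mul_sq_of_sub_eq u hxu hhu,
    Units.mul_inv_cancel_right, hleft]
  abel

lemma Commute.neg_mul_sq_add_mul {z : R} (hzx : Commute z x) (hzy : Commute z y)
    (hza : Commute z a) : Commute z (-(x * y ^ 2) + a * y) :=
  ((hzx.mul_right (hzy.pow_right 2)).neg_right).add_right (hza.mul_right hzy)

end CanonicalR3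

/-- The transformation r3 of the quantum Garnier system G(1,1,1,1,1) is a quantum
canonical transformation. -/
theorem quantum_garnier_G11111_r3_canonical
    {R : Type*} [Ring R]
    (h α3 : R)
    (hh : ∀ r : R, h * r = r * h)
    (hA3 : ∀ r : R, α3 * r = r * α3)
    (x1 y1 x2 y2 : R)
    (hx1y1 : x1 * y1 - y1 * x1 = h)
    (hx2y2 : x2 * y2 - y2 * x2 = h)
    (hx1x2 : x1 * x2 - x2 * x1 = 0)
    (hy1y2 : y1 * y2 - y2 * y1 = 0)
    (hx1y2 : x1 * y2 - y2 * x1 = 0)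
    (hx2y1 : x2 * y1 - y1 * x2 = 0)
    (y1i : R) (hy1il : y1i * y1 = 1) (hy1ir : y1 * y1i = 1)
    (q1 p1 q2 p2 : R)
    (hq1 : q1 = -(x1 * y1^2) + α3 * y1)
    (hp1 : p1 = y1i)
    (hq2 : q2 = x2)
    (hp2 : p2 = y2) :
    q1 * p1 - p1 * q1 = h ∧ q2 * p2 - p2 * q2 = h ∧
    q1 * q2 - q2 * q1 = 0 ∧ p1 * p2 - p2 * p1 = 0 ∧
    q1 * p2 - p2 * q1 = 0 ∧ q2 * p1 - p1 * q2 = 0 := by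
  subst q1 p1 q2 p2
  let u : Rˣ := ⟨y1, y1i, hy1ir, hy1il⟩
  have hx2u : Commute x2 u := sub_eq_zero.mp hx2y1
  have hy2u : Commute y2 u := (sub_eq_zero.mp hy1y2).symm
  have hx2q1 : Commute x2 (-(x1 * y1 ^ 2) + α3 * y1) :=
    Commute.neg_mul_sq_add_mul (sub_eq_zero.mp hx1x2).symm hx2u (hA3 x2).symm
  have hy2q1 : Commute y2 (-(x1 * y1 ^ 2) + α3 * y1) :=
    Commute.neg_mul_sq_add_mul (sub_eq_zero.mp hx1y2).symm hy2u (hA3 y2).symm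
  refine ⟨sub_mul_sq_add_mul_commutator_inv u hx1y1 (hh y1) (hA3 y1), hx2y2,
    sub_eq_zero.mpr hx2q1.symm.eq, sub_eq_zero.mpr (hy2u.units_inv_right.symm.eq),
    sub_eq_zero.mpr hy2q1.symm.eq, sub_eq_zero.mpr hx2u.units_inv_right.eq⟩
end

section
/- The transformation r5 of the quantum Garnier system G(1,1,1,1,1) is a quantum canonical transformation: suppose y1 is a unit of R, and define q1 = −x1y1^2 − x2 + α5·y1 + 1, p1 = y1^{-1}, q2 = x2, p2 = y1^{-1} + y2. Then (q1, p1, q2, p2) again satisfy the canonical commutation relations: [q1,p1] = [q2,p2] = h and [q1,q2] = [p1,p2] = [q1,p2] = [q2,p1] = 0. -/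
/-!
Everything commuting with the unit `y1` commutes with `y1⁻¹`, and since `⁅x1, y1⁆ = h` is
central, `⁅x1 * y1 ^ 2, y1⁻¹⁆ = -h`. So `q1` has bracket `h` with `p1 = y1⁻¹` (from the term
`-x1 y1²`) and bracket `-h` with `y2` (from the term `-x2`); these cancel in `⁅q1, p2⁆`, and the
remaining relations are plain commutations.
-/

section

variable {R : Type*} [Ring R]

def r5Q1 (α5 x1 y1 x2 : R) : R := -(x1 * y1 ^ 2) - x2 + α5 * y1 + 1

theorem commute_r5Q1 {α5 x1 y1 x2 z : R} (hα5 : Commute α5 z) (hx1 : Commute x1 z)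
    (hy1 : Commute y1 z) (hx2 : Commute x2 z) : Commute (r5Q1 α5 x1 y1 x2) z :=
  (((hx1.mul_left (hy1.pow_left 2)).neg_left.sub_left hx2).add_left (hα5.mul_left hy1)).add_left
    (Commute.one_left z)

attribute [local instance] LieRing.ofAssociativeRing

theorem lie_mul_left_of_commute (a : R) {b c : R} (hbc : Commute b c) :
    ⁅a * b, c⁆ = ⁅a, c⁆ * b := by
  rw [Ring.lie_def, Ring.lie_def, sub_mul, mul_assoc, hbc.eq, mul_assoc, mul_assoc]

theorem lie_mul_units_inv (a : R) (u : Rˣ) : ⁅a * u, (↑u⁻¹ : R)⁆ = -(↑u⁻¹ * ⁅a, (u : R)⁆) := by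
  rw [Ring.lie_def, Ring.lie_def, mul_assoc, Units.mul_inv, mul_one, mul_sub,
    ← mul_assoc _ (u : R), Units.inv_mul, one_mul, neg_sub]

theorem lie_mul_sq_units_inv_of_commute (x : R) (u : Rˣ) (hc : Commute ⁅x, (u : R)⁆ u) :
    ⁅x * (u : R) ^ 2, (↑u⁻¹ : R)⁆ = -⁅x, (u : R)⁆ := by
  rw [sq, ← mul_assoc, lie_mul_units_inv, lie_mul_left_of_commute _ (Commute.refl _), hc.eq,
    ← mul_assoc, Units.inv_mul, one_mul]

theorem lie_r5Q1_units_inv {h α5 x1 x2 : R} {u : Rˣ} (hα5 : Commute α5 u)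
    (hx1 : ⁅x1, (u : R)⁆ = h) (hh : Commute h u) (hx2 : Commute x2 u) :
    ⁅r5Q1 α5 x1 u x2, (↑u⁻¹ : R)⁆ = h := by
  have hx1u : ⁅x1 * (u : R) ^ 2, (↑u⁻¹ : R)⁆ = -h :=
    hx1 ▸ lie_mul_sq_units_inv_of_commute x1 u (hx1 ▸ hh)
  have hα5u : Commute (α5 * u) (↑u⁻¹ : R) := (hα5.mul_left (Commute.refl _)).units_inv_right
  rw [r5Q1, add_lie, add_lie, sub_lie, neg_lie, hx1u, hx2.units_inv_right.lie_eq, hα5u.lie_eq,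
    (Commute.one_left _).lie_eq]
  abel

theorem lie_r5Q1_of_lie_eq {h α5 x1 y1 x2 y2 : R} (hα5 : Commute α5 y2) (hx1 : Commute x1 y2)
    (hy1 : Commute y1 y2) (hx2 : ⁅x2, y2⁆ = h) : ⁅r5Q1 α5 x1 y1 x2, y2⁆ = -h := by
  rw [r5Q1, add_lie, add_lie, sub_lie, neg_lie, (hx1.mul_left (hy1.pow_left 2)).lie_eq, hx2,
    (hα5.mul_left hy1).lie_eq, (Commute.one_left _).lie_eq]
  abel

end

/-- The transformation r5 of the quantum Garnier system G(1,1,1,1,1) is a quantum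
canonical transformation. -/
theorem quantum_garnier_G11111_r5_canonical
    {R : Type*} [Ring R]
    (h α5 : R)
    (hh : ∀ r : R, h * r = r * h)
    (hA5 : ∀ r : R, α5 * r = r * α5)
    (x1 y1 x2 y2 : R)
    (hx1y1 : x1 * y1 - y1 * x1 = h)
    (hx2y2 : x2 * y2 - y2 * x2 = h)
    (hx1x2 : x1 * x2 - x2 * x1 = 0)
    (hy1y2 : y1 * y2 - y2 * y1 = 0)
    (hx1y2 : x1 * y2 - y2 * x1 = 0)
    (hx2y1 : x2 * y1 - y1 * x2 = 0)
    (y1i : R) (hy1il : y1i * y1 = 1) (hy1ir : y1 * y1i = 1)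
    (q1 p1 q2 p2 : R)
    (hq1 : q1 = -(x1 * y1^2) - x2 + α5 * y1 + 1)
    (hp1 : p1 = y1i)
    (hq2 : q2 = x2)
    (hp2 : p2 = y1i + y2) :
    q1 * p1 - p1 * q1 = h ∧ q2 * p2 - p2 * q2 = h ∧
    q1 * q2 - q2 * q1 = 0 ∧ p1 * p2 - p2 * p1 = 0 ∧
    q1 * p2 - p2 * q1 = 0 ∧ q2 * p1 - p1 * q2 = 0 := by
  let : LieRing R := LieRing.ofAssociativeRing
  let u : Rˣ := ⟨y1, y1i, hy1ir, hy1il⟩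
  have hx2y1' : Commute x2 y1 := commute_iff_lie_eq.mpr hx2y1
  have hy1y2' : Commute y1 y2 := commute_iff_lie_eq.mpr hy1y2
  have hx2p1 : Commute x2 y1i := hx2y1'.units_inv_right (u := u)
  have hq1p1 : ⁅q1, y1i⁆ = h := hq1 ▸ lie_r5Q1_units_inv (u := u) (hA5 y1) hx1y1 (hh y1) hx2y1'
  have hq1y2 : ⁅q1, y2⁆ = -h :=
    hq1 ▸ lie_r5Q1_of_lie_eq (hA5 y2) (commute_iff_lie_eq.mpr hx1y2) hy1y2' hx2y2
  have hq1q2 : Commute q1 x2 :=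
    hq1 ▸ commute_r5Q1 (hA5 x2) (commute_iff_lie_eq.mpr hx1x2) hx2y1'.symm (Commute.refl x2)
  subst p1 q2 p2
  refine ⟨hq1p1, ?_, hq1q2.lie_eq, ?_, ?_, hx2p1.lie_eq⟩
  · show ⁅x2, y1i + y2⁆ = h
    rw [lie_add, hx2p1.lie_eq, zero_add]
    exact hx2y2
  · exact ((Commute.refl y1i).add_right (hy1y2'.units_inv_left (u := u))).lie_eq
  · show ⁅q1, y1i + y2⁆ = 0
    rw [lie_add, hq1p1, hq1y2, add_neg_cancel]
end

section
/- The transformation r6 of the quantum Garnier system G(1,1,1,1,1) is a quantum canonical transformation: suppose y1 is a unit of R and t2 is a central unit of R, and define q1 = −x1y1^2 − t1t2^{-1}·x2 + α6·y1 + t1, p1 = y1^{-1}, q2 = x2, p2 = t1t2^{-1}·y1^{-1} + y2. Then (q1, p1, q2, p2) again satisfy the canonical commutation relations: [q1,p1] = [q2,p2] = h and [q1,q2] = [p1,p2] = [q1,p2] = [q2,p1] = 0. -/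
/-- The transformation r6 of the quantum Garnier system G(1,1,1,1,1) is a quantum
canonical transformation. -/
theorem quantum_garnier_G11111_r6_canonical
    {R : Type*} [Ring R]
    (h α6 t1 t2 : R)
    (hh : ∀ r : R, h * r = r * h)
    (hA6 : ∀ r : R, α6 * r = r * α6)
    (ht1 : ∀ r : R, t1 * r = r * t1)
    (ht2 : ∀ r : R, t2 * r = r * t2)
    (x1 y1 x2 y2 : R)
    (hx1y1 : x1 * y1 - y1 * x1 = h)
    (hx2y2 : x2 * y2 - y2 * x2 = h)
    (hx1x2 : x1 * x2 - x2 * x1 = 0)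
    (hy1y2 : y1 * y2 - y2 * y1 = 0)
    (hx1y2 : x1 * y2 - y2 * x1 = 0)
    (hx2y1 : x2 * y1 - y1 * x2 = 0)
    (y1i : R) (hy1il : y1i * y1 = 1) (hy1ir : y1 * y1i = 1)
    (t2i : R) (ht2il : t2i * t2 = 1) (ht2ir : t2 * t2i = 1)
    (q1 p1 q2 p2 : R)
    (hq1 : q1 = -(x1 * y1^2) - t1 * t2i * x2 + α6 * y1 + t1)
    (hp1 : p1 = y1i)
    (hq2 : q2 = x2)
    (hp2 : p2 = t1 * t2i * y1i + y2) :
    q1 * p1 - p1 * q1 = h ∧ q2 * p2 - p2 * q2 = h ∧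
    q1 * q2 - q2 * q1 = 0 ∧ p1 * p2 - p2 * p1 = 0 ∧
    q1 * p2 - p2 * q1 = 0 ∧ q2 * p1 - p1 * q2 = 0 := by
  -- basic swap lemmas
  have e1 : y1 * x1 = x1 * y1 - h := by rw [← hx1y1]; noncomm_ring
  have c12 : x2 * x1 = x1 * x2 := by rw [sub_eq_zero] at hx1x2; rw [hx1x2]
  have cy : y2 * y1 = y1 * y2 := by rw [sub_eq_zero] at hy1y2; rw [hy1y2]
  have cxy : y2 * x1 = x1 * y2 := by rw [sub_eq_zero] at hx1y2; rw [hx1y2]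
  have cyx : y1 * x2 = x2 * y1 := by rw [sub_eq_zero] at hx2y1; rw [hx2y1]
  have ei1 : y1i * x1 = x1 * y1i + h * (y1i * y1i) := by
    have := congrArg (fun r => y1i * r * y1i) hx1y1
    simp only [mul_sub, sub_mul, mul_assoc, hy1ir] at this
    simp only [← mul_assoc, hy1il, one_mul, mul_one] at this
    have h3 : y1i * h * y1i = h * (y1i * y1i) := by
      rw [← hh y1i, mul_assoc]
    rw [h3] at this
    have := eq_add_of_sub_eq this
    rw [this, add_comm]
  have ei2 : y1i * x2 = x2 * y1i := by
    have := congrArg (fun r => y1i * r * y1i) cyx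
    simp only [mul_assoc] at this
    simp only [hy1ir, mul_one, hy1il] at this
    simpa [← mul_assoc, hy1il] using this.symm
  have ei3 : y1i * y2 = y2 * y1i := by
    have := congrArg (fun r => y1i * r * y1i) cy
    simp only [mul_assoc] at this
    simp only [hy1ir, mul_one, hy1il] at this
    simpa [← mul_assoc, hy1il] using this
  -- centrality of t2i and of c := t1 * t2i
  have ht2i : ∀ r : R, t2i * r = r * t2i := by
    intro r
    have h1 : t2i * r = t2i * r * (t2 * t2i) := by rw [ht2ir, mul_one]
    rw [h1, ← mul_assoc, mul_assoc t2i r t2, ← ht2 r, ← mul_assoc t2i t2 r, ht2il, one_mul]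
  have hc : ∀ r : R, t1 * t2i * r = r * (t1 * t2i) := by
    intro r
    rw [mul_assoc, ht2i r, ← mul_assoc, ht1 r, mul_assoc]
  -- squares commute
  have sq : ∀ a b : R, a * b = b * a → a * b ^ 2 = b ^ 2 * a := by
    intro a b hab
    rw [pow_two, ← mul_assoc, hab, mul_assoc, hab, ← mul_assoc]
  -- leaf computations
  have A1 : x1 * y1 ^ 2 * y1i = x1 * y1 := by
    simp [pow_two, mul_assoc, hy1ir]
  have B1 : y1i * y1 ^ 2 = y1 := by rw [pow_two, ← mul_assoc, hy1il, one_mul]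
  have A2 : y1i * (x1 * y1 ^ 2) = x1 * y1 + h := by
    calc y1i * (x1 * y1 ^ 2) = (y1i * x1) * y1 ^ 2 := by noncomm_ring
      _ = x1 * (y1i * y1 ^ 2) + h * (y1i * (y1i * y1 ^ 2)) := by rw [ei1]; noncomm_ring
      _ = x1 * y1 + h := by rw [B1, hy1il, mul_one]
  have key1 : x1 * y1 ^ 2 * y1i - y1i * (x1 * y1 ^ 2) = -h := by
    rw [A1, A2]; noncomm_ring
  have C2 : y1i * (t1 * t2i * x2) = t1 * t2i * x2 * y1i := by
    calc y1i * (t1 * t2i * x2) = (y1i * (t1 * t2i)) * x2 := by noncomm_ring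
      _ = (t1 * t2i) * (y1i * x2) := by rw [← hc y1i]; noncomm_ring
      _ = t1 * t2i * x2 * y1i := by rw [ei2]; noncomm_ring
  have key2 : t1 * t2i * x2 * y1i - y1i * (t1 * t2i * x2) = 0 := by
    rw [C2, sub_self]
  have C3a : α6 * y1 * y1i = α6 := by rw [mul_assoc, hy1ir, mul_one]
  have C3b : y1i * (α6 * y1) = α6 := by
    rw [← mul_assoc, ← hA6 y1i, mul_assoc, hy1il, mul_one]
  have key3 : α6 * y1 * y1i - y1i * (α6 * y1) = 0 := by rw [C3a, C3b, sub_self]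
  have key4 : t1 * y1i - y1i * t1 = 0 := by rw [ht1 y1i, sub_self]
  -- leaf for goal 2 and 4
  have C4 : x2 * (t1 * t2i * y1i) = t1 * t2i * y1i * x2 := by
    calc x2 * (t1 * t2i * y1i) = (x2 * (t1 * t2i)) * y1i := by noncomm_ring
      _ = (t1 * t2i) * (x2 * y1i) := by rw [← hc x2]; noncomm_ring
      _ = t1 * t2i * y1i * x2 := by rw [← ei2]; noncomm_ring
  have C7 : y1i * (t1 * t2i * y1i) = t1 * t2i * y1i * y1i := by
    calc y1i * (t1 * t2i * y1i) = (y1i * (t1 * t2i)) * y1i := by noncomm_ring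
      _ = t1 * t2i * y1i * y1i := by rw [← hc y1i]
  -- leaves for goal 3
  have cx2sq : x2 * y1 ^ 2 = y1 ^ 2 * x2 := sq x2 y1 cyx.symm
  have cy2sq : y2 * y1 ^ 2 = y1 ^ 2 * y2 := sq y2 y1 cy
  have D1 : x1 * y1 ^ 2 * x2 = x1 * (x2 * y1 ^ 2) := by
    rw [mul_assoc, ← cx2sq]
  have D2 : x2 * (x1 * y1 ^ 2) = x1 * (x2 * y1 ^ 2) := by
    rw [← mul_assoc, c12, mul_assoc]
  have L31 : x1 * y1 ^ 2 * x2 - x2 * (x1 * y1 ^ 2) = 0 := by rw [D1, D2, sub_self]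
  have C5 : x2 * (t1 * t2i * x2) = t1 * t2i * x2 * x2 := by
    rw [← mul_assoc, ← hc x2]
  have L32 : t1 * t2i * x2 * x2 - x2 * (t1 * t2i * x2) = 0 := by rw [C5, sub_self]
  have C6 : x2 * (α6 * y1) = α6 * (x2 * y1) := by
    rw [← mul_assoc, ← hA6 x2, mul_assoc]
  have C6b : α6 * y1 * x2 = α6 * (x2 * y1) := by rw [mul_assoc, cyx]
  have L33 : α6 * y1 * x2 - x2 * (α6 * y1) = 0 := by rw [C6, C6b, sub_self]
  have L34 : t1 * x2 - x2 * t1 = 0 := by rw [ht1 x2, sub_self]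
  -- leaves for goal 5
  have K1a : x1 * y1 ^ 2 * (t1 * t2i * y1i) = t1 * t2i * (x1 * y1) := by
    calc x1 * y1 ^ 2 * (t1 * t2i * y1i) = ((x1 * y1 ^ 2) * (t1 * t2i)) * y1i := by noncomm_ring
      _ = ((t1 * t2i) * (x1 * y1 ^ 2)) * y1i := by rw [← hc (x1 * y1 ^ 2)]
      _ = (t1 * t2i) * (x1 * y1 ^ 2 * y1i) := by noncomm_ring
      _ = t1 * t2i * (x1 * y1) := by rw [A1]
  have K1b : t1 * t2i * y1i * (x1 * y1 ^ 2) = t1 * t2i * (x1 * y1 + h) := by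
    calc t1 * t2i * y1i * (x1 * y1 ^ 2) = (t1 * t2i) * (y1i * (x1 * y1 ^ 2)) := by noncomm_ring
      _ = t1 * t2i * (x1 * y1 + h) := by rw [A2]
  have K_AE : x1 * y1 ^ 2 * (t1 * t2i * y1i) - t1 * t2i * y1i * (x1 * y1 ^ 2)
      = -(t1 * t2i * h) := by
    rw [K1a, K1b]; noncomm_ring
  have D3 : x1 * y1 ^ 2 * y2 = x1 * (y1 ^ 2 * y2) := by rw [mul_assoc]
  have D4 : y2 * (x1 * y1 ^ 2) = x1 * (y1 ^ 2 * y2) := by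
    rw [← mul_assoc, cxy, mul_assoc, cy2sq]
  have K_Ay2 : x1 * y1 ^ 2 * y2 - y2 * (x1 * y1 ^ 2) = 0 := by rw [D3, D4, sub_self]
  have K_BE : t1 * t2i * x2 * (t1 * t2i * y1i) - t1 * t2i * y1i * (t1 * t2i * x2) = 0 := by
    have s1 : t1 * t2i * x2 * (t1 * t2i * y1i) = (t1 * t2i) * ((t1 * t2i * y1i) * x2) := by
      calc t1 * t2i * x2 * (t1 * t2i * y1i) = (t1 * t2i) * (x2 * (t1 * t2i * y1i)) := by
            noncomm_ring
        _ = (t1 * t2i) * ((t1 * t2i * y1i) * x2) := by rw [C4]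
    have s2 : t1 * t2i * y1i * (t1 * t2i * x2) = (t1 * t2i) * ((t1 * t2i * y1i) * x2) := by
      calc t1 * t2i * y1i * (t1 * t2i * x2) = ((t1 * t2i * y1i) * (t1 * t2i)) * x2 := by
            noncomm_ring
        _ = ((t1 * t2i) * (t1 * t2i * y1i)) * x2 := by rw [hc (t1 * t2i * y1i)]
        _ = (t1 * t2i) * ((t1 * t2i * y1i) * x2) := by noncomm_ring
    rw [s1, s2, sub_self]
  have K_By2 : t1 * t2i * x2 * y2 - y2 * (t1 * t2i * x2) = t1 * t2i * h := by
    have s1 : t1 * t2i * x2 * y2 = (t1 * t2i) * (x2 * y2) := by noncomm_ring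
    have s2 : y2 * (t1 * t2i * x2) = (t1 * t2i) * (y2 * x2) := by
      calc y2 * (t1 * t2i * x2) = (y2 * (t1 * t2i)) * x2 := by noncomm_ring
        _ = ((t1 * t2i) * y2) * x2 := by rw [← hc y2]
        _ = (t1 * t2i) * (y2 * x2) := by noncomm_ring
    rw [s1, s2, ← mul_sub, hx2y2]
  have K_CE : α6 * y1 * (t1 * t2i * y1i) - t1 * t2i * y1i * (α6 * y1) = 0 := by
    have s1 : α6 * y1 * (t1 * t2i * y1i) = (t1 * t2i) * α6 := by
      calc α6 * y1 * (t1 * t2i * y1i) = ((α6 * y1) * (t1 * t2i)) * y1i := by noncomm_ring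
        _ = ((t1 * t2i) * (α6 * y1)) * y1i := by rw [← hc (α6 * y1)]
        _ = (t1 * t2i) * (α6 * y1 * y1i) := by noncomm_ring
        _ = (t1 * t2i) * α6 := by rw [C3a]
    have s2 : t1 * t2i * y1i * (α6 * y1) = (t1 * t2i) * α6 := by
      calc t1 * t2i * y1i * (α6 * y1) = (t1 * t2i) * (y1i * (α6 * y1)) := by noncomm_ring
        _ = (t1 * t2i) * α6 := by rw [C3b]
    rw [s1, s2, sub_self]
  have K_Cy2 : α6 * y1 * y2 - y2 * (α6 * y1) = 0 := by
    have s1 : α6 * y1 * y2 = α6 * (y1 * y2) := by rw [mul_assoc]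
    have s2 : y2 * (α6 * y1) = α6 * (y1 * y2) := by
      rw [← mul_assoc, ← hA6 y2, mul_assoc, cy]
    rw [s1, s2, sub_self]
  have K_DE : t1 * (t1 * t2i * y1i) - t1 * t2i * y1i * t1 = 0 := by
    rw [ht1 (t1 * t2i * y1i), sub_self]
  have K_Dy2 : t1 * y2 - y2 * t1 = 0 := by rw [ht1 y2, sub_self]
  refine ⟨?_, ?_, ?_, ?_, ?_, ?_⟩
  · -- [q1, p1] = h
    rw [hq1, hp1]
    have decomp : (-(x1 * y1 ^ 2) - t1 * t2i * x2 + α6 * y1 + t1) * y1i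
        - y1i * (-(x1 * y1 ^ 2) - t1 * t2i * x2 + α6 * y1 + t1)
        = -(x1 * y1 ^ 2 * y1i - y1i * (x1 * y1 ^ 2))
          - (t1 * t2i * x2 * y1i - y1i * (t1 * t2i * x2))
          + (α6 * y1 * y1i - y1i * (α6 * y1)) + (t1 * y1i - y1i * t1) := by
      noncomm_ring
    rw [decomp, key1, key2, key3, key4]; noncomm_ring
  · -- [q2, p2] = h
    rw [hq2, hp2]
    have decomp : x2 * (t1 * t2i * y1i + y2) - (t1 * t2i * y1i + y2) * x2
        = (x2 * (t1 * t2i * y1i) - t1 * t2i * y1i * x2) + (x2 * y2 - y2 * x2) := by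
      noncomm_ring
    rw [decomp, C4, hx2y2]; noncomm_ring
  · -- [q1, q2] = 0
    rw [hq1, hq2]
    have decomp : (-(x1 * y1 ^ 2) - t1 * t2i * x2 + α6 * y1 + t1) * x2
        - x2 * (-(x1 * y1 ^ 2) - t1 * t2i * x2 + α6 * y1 + t1)
        = -(x1 * y1 ^ 2 * x2 - x2 * (x1 * y1 ^ 2))
          - (t1 * t2i * x2 * x2 - x2 * (t1 * t2i * x2))
          + (α6 * y1 * x2 - x2 * (α6 * y1)) + (t1 * x2 - x2 * t1) := by
      noncomm_ring
    rw [decomp, L31, L32, L33, L34]; noncomm_ring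
  · -- [p1, p2] = 0
    rw [hp1, hp2]
    have decomp : y1i * (t1 * t2i * y1i + y2) - (t1 * t2i * y1i + y2) * y1i
        = (y1i * (t1 * t2i * y1i) - t1 * t2i * y1i * y1i) + (y1i * y2 - y2 * y1i) := by
      noncomm_ring
    rw [decomp, C7, ei3]; noncomm_ring
  · -- [q1, p2] = 0
    rw [hq1, hp2]
    have decomp : (-(x1 * y1 ^ 2) - t1 * t2i * x2 + α6 * y1 + t1) * (t1 * t2i * y1i + y2)
        - (t1 * t2i * y1i + y2) * (-(x1 * y1 ^ 2) - t1 * t2i * x2 + α6 * y1 + t1)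
        = -(x1 * y1 ^ 2 * (t1 * t2i * y1i) - t1 * t2i * y1i * (x1 * y1 ^ 2))
          - (x1 * y1 ^ 2 * y2 - y2 * (x1 * y1 ^ 2))
          - (t1 * t2i * x2 * (t1 * t2i * y1i) - t1 * t2i * y1i * (t1 * t2i * x2))
          - (t1 * t2i * x2 * y2 - y2 * (t1 * t2i * x2))
          + (α6 * y1 * (t1 * t2i * y1i) - t1 * t2i * y1i * (α6 * y1))
          + (α6 * y1 * y2 - y2 * (α6 * y1))
          + (t1 * (t1 * t2i * y1i) - t1 * t2i * y1i * t1)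
          + (t1 * y2 - y2 * t1) := by
      noncomm_ring
    rw [decomp, K_AE, K_Ay2, K_BE, K_By2, K_CE, K_Cy2, K_DE, K_Dy2]; noncomm_ring
  · -- [q2, p1] = 0
    rw [hq2, hp1, ← ei2, sub_self]
end

section
/- The transformation r1 of the quantum degenerate Garnier system G(1,1,3) is a quantum canonical transformation: suppose y1 is a unit of R, and define q1 = −x1y1^2 − x2y1y2 + α1·y1, p1 = y1^{-1}, q2 = x2y1, p2 = y2y1^{-1}. Then (q1, p1, q2, p2) again satisfy the canonical commutation relations: [q1,p1] = [q2,p2] = h and [q1,q2] = [p1,p2] = [q1,p2] = [q2,p1] = 0. -/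
/-- The transformation r1 of the quantum degenerate Garnier system G(1,1,3) is a
quantum canonical transformation. -/
theorem quantum_garnier_G113_r1_canonical
    {R : Type*} [Ring R]
    (h α1 : R)
    (hh : ∀ r : R, h * r = r * h)
    (hA1 : ∀ r : R, α1 * r = r * α1)
    (x1 y1 x2 y2 : R)
    (hx1y1 : x1 * y1 - y1 * x1 = h)
    (hx2y2 : x2 * y2 - y2 * x2 = h)
    (hx1x2 : x1 * x2 - x2 * x1 = 0)
    (hy1y2 : y1 * y2 - y2 * y1 = 0)
    (hx1y2 : x1 * y2 - y2 * x1 = 0)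
    (hx2y1 : x2 * y1 - y1 * x2 = 0)
    (y1i : R) (hy1il : y1i * y1 = 1) (hy1ir : y1 * y1i = 1)
    (q1 p1 q2 p2 : R)
    (hq1 : q1 = -(x1 * y1^2) - x2 * y1 * y2 + α1 * y1)
    (hp1 : p1 = y1i)
    (hq2 : q2 = x2 * y1)
    (hp2 : p2 = y2 * y1i) :
    q1 * p1 - p1 * q1 = h ∧ q2 * p2 - p2 * q2 = h ∧
    q1 * q2 - q2 * q1 = 0 ∧ p1 * p2 - p2 * p1 = 0 ∧
    q1 * p2 - p2 * q1 = 0 ∧ q2 * p1 - p1 * q2 = 0 := by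
  -- basic swap rules
  have r2 : y1 * x1 = x1 * y1 - h := by rw [← hx1y1]; abel
  have r5 : y2 * x2 = x2 * y2 - h := by rw [← hx2y2]; abel
  have r1 : x2 * x1 = x1 * x2 := by have := sub_eq_zero.mp hx1x2; exact this.symm
  have r6 : y2 * y1 = y1 * y2 := by have := sub_eq_zero.mp hy1y2; exact this.symm
  have r4 : y2 * x1 = x1 * y2 := by have := sub_eq_zero.mp hx1y2; exact this.symm
  have r3 : y1 * x2 = x2 * y1 := by have := sub_eq_zero.mp hx2y1; exact this.symm
  -- elements commuting with y1 also commute with y1i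
  have comm_inv : ∀ a : R, y1 * a = a * y1 → y1i * a = a * y1i := by
    intro a ha
    calc y1i * a = y1i * a * (y1 * y1i) := by rw [hy1ir, mul_one]
      _ = y1i * (a * y1) * y1i := by noncomm_ring
      _ = y1i * (y1 * a) * y1i := by rw [← ha]
      _ = (y1i * y1) * a * y1i := by noncomm_ring
      _ = a * y1i := by rw [hy1il, one_mul]
  have r8 : y1i * x2 = x2 * y1i := comm_inv x2 r3
  have r11 : y1i * y2 = y2 * y1i := comm_inv y2 r6.symm
  have a1x : x1 * y1 = y1 * x1 + h := by rw [← hx1y1]; abel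
  have r7 : y1i * x1 = x1 * y1i + h * (y1i * y1i) := by
    calc y1i * x1 = y1i * x1 * (y1 * y1i) := by rw [hy1ir, mul_one]
      _ = y1i * (x1 * y1) * y1i := by noncomm_ring
      _ = y1i * (y1 * x1 + h) * y1i := by rw [a1x]
      _ = (y1i * y1) * x1 * y1i + y1i * h * y1i := by noncomm_ring
      _ = x1 * y1i + h * (y1i * y1i) := by rw [hy1il, one_mul, ← hh, mul_assoc]
  -- t-variants
  have r1' : ∀ t : R, x2 * (x1 * t) = x1 * (x2 * t) := fun t => by
    rw [← mul_assoc, r1, mul_assoc]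
  have r2' : ∀ t : R, y1 * (x1 * t) = x1 * (y1 * t) - h * t := fun t => by
    rw [← mul_assoc, r2, sub_mul, mul_assoc]
  have r3' : ∀ t : R, y1 * (x2 * t) = x2 * (y1 * t) := fun t => by
    rw [← mul_assoc, r3, mul_assoc]
  have r4' : ∀ t : R, y2 * (x1 * t) = x1 * (y2 * t) := fun t => by
    rw [← mul_assoc, r4, mul_assoc]
  have r5' : ∀ t : R, y2 * (x2 * t) = x2 * (y2 * t) - h * t := fun t => by
    rw [← mul_assoc, r5, sub_mul, mul_assoc]
  have r6' : ∀ t : R, y2 * (y1 * t) = y1 * (y2 * t) := fun t => by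
    rw [← mul_assoc, r6, mul_assoc]
  have r7' : ∀ t : R, y1i * (x1 * t) = x1 * (y1i * t) + h * (y1i * (y1i * t)) := fun t => by
    rw [← mul_assoc, r7, add_mul, mul_assoc, mul_assoc, mul_assoc]
  have r8' : ∀ t : R, y1i * (x2 * t) = x2 * (y1i * t) := fun t => by
    rw [← mul_assoc, r8, mul_assoc]
  have r11r : y2 * y1i = y1i * y2 := r11.symm
  have r11' : ∀ t : R, y2 * (y1i * t) = y1i * (y2 * t) := fun t => by
    rw [← mul_assoc, r11r, mul_assoc]
  have r9' : ∀ t : R, y1i * (y1 * t) = t := fun t => by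
    rw [← mul_assoc, hy1il, one_mul]
  have r10' : ∀ t : R, y1 * (y1i * t) = t := fun t => by
    rw [← mul_assoc, hy1ir, one_mul]
  -- central element moves
  have ch : ∀ a t : R, a * (h * t) = h * (a * t) := fun a t => by
    rw [← mul_assoc, ← hh, mul_assoc]
  have ch0 : ∀ a : R, a * h = h * a := fun a => (hh a).symm
  have ca : ∀ a t : R, a * (α1 * t) = α1 * (a * t) := fun a t => by
    rw [← mul_assoc, ← hA1, mul_assoc]
  have ca0 : ∀ a : R, a * α1 = α1 * a := fun a => (hA1 a).symm
  subst hq1 hp1 hq2 hp2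
  refine ⟨?_, ?_, ?_, ?_, ?_, ?_⟩ <;>
  · simp only [pow_two, mul_add, add_mul, mul_sub, sub_mul, neg_mul, mul_neg, neg_neg,
      mul_one, one_mul, mul_assoc,
      r1, r1', r2, r2', r3, r3', r4, r4', r5, r5', r6, r6',
      r7, r7', r8, r8', r11r, r11', r9', r10', hy1il, hy1ir,
      ch x1, ch x2, ch y1, ch y2, ch p1, ch α1,
      ch0 x1, ch0 x2, ch0 y1, ch0 y2, ch0 p1, ch0 α1,
      ca x1, ca x2, ca y1, ca y2, ca p1,
      ca0 x1, ca0 x2, ca0 y1, ca0 y2, ca0 p1]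
    abel
end

section
/- The transformation r4 of the quantum degenerate Garnier system G(1,1,3) is a quantum canonical transformation: suppose y1 is a unit of R, and define q1 = −x1y1^2 − x2y1y2 + 2y1^{-1}(y2 + 1) + α4·y1 − 2t1, p1 = y1^{-1}, q2 = x2y1 + 2y1^{-1}(y2 + 1) − 2t2, p2 = y2y1^{-1}. Then (q1, p1, q2, p2) again satisfy the canonical commutation relations: [q1,p1] = [q2,p2] = h and [q1,q2] = [p1,p2] = [q1,p2] = [q2,p1] = 0. -/
/-!
The map r4 is the composite of three canonical transformations. First the point transformation
`(x₁, y₁, x₂, y₂) ↦ (x₁ + x₂ y₂ y₁⁻¹, y₁, x₂ y₁, y₂ y₁⁻¹)`, then the inversion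
`(x₁, y₁) ↦ (-x₁ y₁², y₁⁻¹)` of the first pair, and finally the shift of the coordinates by
`(2 (p₁ + p₂) + α₄ p₁⁻¹ - 2 t₁, 2 (p₁ + p₂) - 2 t₂)`, the gradient of
`(p₁ + p₂)² + α₄ log p₁ - 2 t₁ p₁ - 2 t₂ p₂`. A shift by functions of the momenta preserves the
relations as soon as its two components have equal cross derivatives.
-/

section
-- Makes the Lie-ring API (`lie_add`, `lie_skew`, …) available for the commutator `a * b - b * a`.
attribute [local instance] LieRing.ofAssociativeRing

namespace Ring
variable {R : Type*} [Ring R]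

theorem lie_invOf (a b : R) [Invertible b] : ⁅a, ⅟b⁆ = -(⅟b * ⁅a, b⁆ * ⅟b) := by
  simp only [lie_def, mul_sub, sub_mul, mul_assoc, mul_invOf_self, mul_one, neg_sub]
  simp only [← mul_assoc, invOf_mul_self, one_mul]

end Ring

variable {R : Type*} [Ring R]

structure IsCCR_s13 (h q₁ p₁ q₂ p₂ : R) : Prop where
  q₁_p₁ : ⁅q₁, p₁⁆ = h
  q₂_p₂ : ⁅q₂, p₂⁆ = h
  q₁_q₂ : Commute q₁ q₂
  p₁_p₂ : Commute p₁ p₂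
  q₁_p₂ : Commute q₁ p₂
  q₂_p₁ : Commute q₂ p₁

theorem isCCR_iff {h q₁ p₁ q₂ p₂ : R} :
    IsCCR_s13 h q₁ p₁ q₂ p₂ ↔ q₁ * p₁ - p₁ * q₁ = h ∧ q₂ * p₂ - p₂ * q₂ = h ∧
      q₁ * q₂ - q₂ * q₁ = 0 ∧ p₁ * p₂ - p₂ * p₁ = 0 ∧
      q₁ * p₂ - p₂ * q₁ = 0 ∧ q₂ * p₁ - p₁ * q₂ = 0 := by
  simp only [← Ring.lie_def, ← commute_iff_lie_eq]
  exact ⟨fun ⟨h₁, h₂, h₃, h₄, h₅, h₆⟩ => ⟨h₁, h₂, h₃, h₄, h₅, h₆⟩,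
    fun ⟨h₁, h₂, h₃, h₄, h₅, h₆⟩ => ⟨h₁, h₂, h₃, h₄, h₅, h₆⟩⟩

namespace IsCCR_s13
variable {h x₁ y₁ x₂ y₂ : R}

theorem rescale (H : IsCCR_s13 h x₁ y₁ x₂ y₂) [Invertible y₁] (hh₁ : Commute h y₁)
    (hh₂ : Commute h y₂) :
    IsCCR_s13 h (x₁ + x₂ * y₂ * ⅟y₁) y₁ (x₂ * y₁) (y₂ * ⅟y₁) := by
  have hy₁ : Commute y₁ (⅟y₁) := (Commute.refl y₁).invOf_right
  have hy₂ : Commute y₂ (⅟y₁) := H.p₁_p₂.symm.invOf_right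
  have hx₂ : ⁅x₂, y₂ * ⅟y₁⁆ = h * ⅟y₁ := by
    rw [Ring.lie_mul, H.q₂_p₂, H.q₂_p₁.invOf_right.lie_eq, mul_zero, add_zero]
  have q₂_p₂ : ⁅x₂ * y₁, y₂ * ⅟y₁⁆ = h := by
    rw [Ring.mul_lie, (H.p₁_p₂.mul_right hy₁).lie_eq, mul_zero, zero_add, hx₂, mul_assoc,
      invOf_mul_self, mul_one]
  have x₁_q₂ : ⁅x₁, x₂ * y₁⁆ = x₂ * h := by
    rw [Ring.lie_mul, H.q₁_q₂.lie_eq, H.q₁_p₁, zero_mul, zero_add]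
  have x₁_p₂ : ⁅x₁, y₂ * ⅟y₁⁆ = -(y₂ * ⅟y₁ * h * ⅟y₁) := by
    rw [Ring.lie_mul, H.q₁_p₂.lie_eq, Ring.lie_invOf, H.q₁_p₁, zero_mul, zero_add, mul_neg,
      ← mul_assoc, ← mul_assoc]
  refine ⟨?_, q₂_p₂, ?_, H.p₁_p₂.mul_right hy₁, ?_, H.q₂_p₁.mul_left (Commute.refl y₁)⟩
  · rw [add_lie, H.q₁_p₁,
      ((H.q₂_p₁.mul_left H.p₁_p₂.symm).mul_left hy₁.symm).lie_eq, add_zero]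
  · rw [commute_iff_lie_eq, add_lie, x₁_q₂, mul_assoc, Ring.mul_lie, ← lie_skew, q₂_p₂,
      ((Commute.refl x₂).mul_right H.q₂_p₁).lie_eq, zero_mul, add_zero, mul_neg,
      add_neg_cancel]
  · have hh : h * ⅟y₁ * (y₂ * ⅟y₁) = y₂ * ⅟y₁ * h * ⅟y₁ := by
      rw [mul_assoc, (hy₂.symm.mul_right (Commute.refl _)).eq, ← mul_assoc,
        (hh₂.mul_right hh₁.invOf_right).eq]
    rw [commute_iff_lie_eq, add_lie, x₁_p₂, mul_assoc x₂, Ring.mul_lie, lie_self, hx₂, mul_zero,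
      zero_add, hh, neg_add_cancel]

theorem invert (H : IsCCR_s13 h x₁ y₁ x₂ y₂) [Invertible y₁] (hh : Commute h y₁) :
    IsCCR_s13 h (-(x₁ * y₁ ^ 2)) (⅟y₁) x₂ y₂ where
  q₁_p₁ := by
    rw [neg_lie, Ring.mul_lie, ((Commute.refl y₁).pow_left 2).invOf_right.lie_eq,
      Ring.lie_invOf, H.q₁_p₁, mul_zero, zero_add, neg_mul, neg_neg, pow_two, ← mul_assoc,
      mul_assoc _ (⅟y₁), invOf_mul_self, mul_one, ← hh.invOf_right.eq, mul_assoc,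
      invOf_mul_self, mul_one]
  q₂_p₂ := H.q₂_p₂
  q₁_q₂ := (H.q₁_q₂.mul_left (H.q₂_p₁.symm.pow_left 2)).neg_left
  p₁_p₂ := H.p₁_p₂.invOf_left
  q₁_p₂ := (H.q₁_p₂.mul_left (H.p₁_p₂.pow_left 2)).neg_left
  q₂_p₁ := H.q₂_p₁.invOf_right

variable {q₁ p₁ q₂ p₂ a b : R}

theorem add (H : IsCCR_s13 h q₁ p₁ q₂ p₂) (ha₁ : Commute a p₁) (ha₂ : Commute a p₂)
    (hb₁ : Commute b p₁) (hb₂ : Commute b p₂) (hab : Commute a b)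
    (hcurl : ⁅q₁, b⁆ = ⁅q₂, a⁆) :
    IsCCR_s13 h (q₁ + a) p₁ (q₂ + b) p₂ where
  q₁_p₁ := by rw [add_lie, H.q₁_p₁, ha₁.lie_eq, add_zero]
  q₂_p₂ := by rw [add_lie, H.q₂_p₂, hb₂.lie_eq, add_zero]
  q₁_q₂ := by
    rw [commute_iff_lie_eq, lie_add, add_lie, add_lie, H.q₁_q₂.lie_eq, hcurl, ← lie_skew a q₂,
      hab.lie_eq, zero_add, add_zero, neg_add_cancel]
  p₁_p₂ := H.p₁_p₂
  q₁_p₂ := H.q₁_p₂.add_left ha₂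
  q₂_p₁ := H.q₂_p₁.add_left hb₁

theorem r4_shift (H : IsCCR_s13 h q₁ p₁ q₂ p₂) [Invertible p₁] {α t₁ t₂ : R}
    (hα : ∀ r, Commute α r) (ht₁ : ∀ r, Commute t₁ r) (ht₂ : ∀ r, Commute t₂ r) :
    IsCCR_s13 h (q₁ + (2 * (p₁ + p₂) + α * ⅟p₁ - 2 * t₁)) p₁
      (q₂ + (2 * (p₁ + p₂) - 2 * t₂)) p₂ := by
  have commute_two_mul_p {r : R} (h₁ : Commute r p₁) (h₂ : Commute r p₂) :
      Commute r (2 * (p₁ + p₂)) :=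
    (Commute.ofNat_right r 2).mul_right (h₁.add_right h₂)
  have two_mul_central {c : R} (hc : ∀ r, Commute c r) (r : R) : Commute (2 * c) r :=
    (Commute.ofNat_left 2 r).mul_left (hc r)
  have lie_two_mul_p (q : R) : ⁅q, 2 * (p₁ + p₂)⁆ = 2 * (⁅q, p₁⁆ + ⁅q, p₂⁆) := by
    rw [Ring.lie_mul, (Commute.ofNat_right q 2).lie_eq, zero_mul, zero_add, lie_add]
  have hs₁ : Commute (2 * (p₁ + p₂)) p₁ := (commute_two_mul_p (Commute.refl p₁) H.p₁_p₂).symm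
  have hs₂ : Commute (2 * (p₁ + p₂)) p₂ :=
    (commute_two_mul_p H.p₁_p₂.symm (Commute.refl p₂)).symm
  have hv₁ : Commute (α * ⅟p₁) p₁ := (hα p₁).mul_left (Commute.refl p₁).invOf_left
  have hv₂ : Commute (α * ⅟p₁) p₂ := (hα p₂).mul_left H.p₁_p₂.invOf_left
  have ha₁ := (hs₁.add_left hv₁).sub_left (two_mul_central ht₁ p₁)
  have ha₂ := (hs₂.add_left hv₂).sub_left (two_mul_central ht₁ p₂)
  refine H.add ha₁ ha₂ (hs₁.sub_left (two_mul_central ht₂ p₁))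
    (hs₂.sub_left (two_mul_central ht₂ p₂))
    ((commute_two_mul_p ha₁ ha₂).sub_right (two_mul_central ht₂ _).symm) ?_
  rw [lie_sub, lie_two_mul_p, H.q₁_p₁, H.q₁_p₂.lie_eq, (two_mul_central ht₂ q₁).symm.lie_eq,
    lie_sub, lie_add, lie_two_mul_p, H.q₂_p₂, H.q₂_p₁.lie_eq, Ring.lie_mul, (hα q₂).symm.lie_eq,
    H.q₂_p₁.invOf_right.lie_eq, (two_mul_central ht₁ q₂).symm.lie_eq]
  simp only [zero_add, add_zero, sub_zero, zero_mul, mul_zero]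

end IsCCR_s13

end

/-- The transformation r4 of the quantum degenerate Garnier system G(1,1,3) is a
quantum canonical transformation. -/
theorem quantum_garnier_G113_r4_canonical
    {R : Type*} [Ring R]
    (h α4 t1 t2 : R)
    (hh : ∀ r : R, h * r = r * h)
    (hA4 : ∀ r : R, α4 * r = r * α4)
    (ht1 : ∀ r : R, t1 * r = r * t1)
    (ht2 : ∀ r : R, t2 * r = r * t2)
    (x1 y1 x2 y2 : R)
    (hx1y1 : x1 * y1 - y1 * x1 = h)
    (hx2y2 : x2 * y2 - y2 * x2 = h)
    (hx1x2 : x1 * x2 - x2 * x1 = 0)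
    (hy1y2 : y1 * y2 - y2 * y1 = 0)
    (hx1y2 : x1 * y2 - y2 * x1 = 0)
    (hx2y1 : x2 * y1 - y1 * x2 = 0)
    (y1i : R) (hy1il : y1i * y1 = 1) (hy1ir : y1 * y1i = 1)
    (q1 p1 q2 p2 : R)
    (hq1 : q1 = -(x1 * y1^2) - x2 * y1 * y2 + 2 * y1i * (y2 + 1) + α4 * y1 - 2 * t1)
    (hp1 : p1 = y1i)
    (hq2 : q2 = x2 * y1 + 2 * y1i * (y2 + 1) - 2 * t2)
    (hp2 : p2 = y2 * y1i) :
    q1 * p1 - p1 * q1 = h ∧ q2 * p2 - p2 * q2 = h ∧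
    q1 * q2 - q2 * q1 = 0 ∧ p1 * p2 - p2 * p1 = 0 ∧
    q1 * p2 - p2 * q1 = 0 ∧ q2 * p1 - p1 * q2 = 0 := by
  let _ : Invertible y1 := ⟨y1i, hy1il, hy1ir⟩
  have H₀ : IsCCR_s13 h x1 y1 x2 y2 := isCCR_iff.2 ⟨hx1y1, hx2y2, hx1x2, hy1y2, hx1y2, hx2y1⟩
  have H := ((H₀.rescale (hh y1) (hh y2)).invert (hh y1)).r4_shift hA4 ht1 ht2
  rw [invOf_invOf] at H
  have hy : y2 * y1 = y1 * y2 := H₀.p₁_p₂.symm.eq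
  have hyi : y2 * y1i = y1i * y2 := H₀.p₁_p₂.symm.invOf_right.eq
  have hq1' :
      q1 = -((x1 + x2 * y2 * y1i) * y1 ^ 2) + (2 * (y1i + y2 * y1i) + α4 * y1 - 2 * t1) := by
    have : x2 * y2 * y1i * y1 ^ 2 = x2 * y1 * y2 := by
      rw [pow_two, ← mul_assoc, mul_assoc _ y1i, hy1il, mul_one, mul_assoc, hy, ← mul_assoc]
    rw [hq1, hyi, add_mul, this]; noncomm_ring
  have hq2' : q2 = x2 * y1 + (2 * (y1i + y2 * y1i) - 2 * t2) := by
    rw [hq2, hyi]; noncomm_ring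
  rw [hq1', hp1, hq2', hp2]
  exact isCCR_iff.1 H
end

section
/- The transformation r2 of the quantum degenerate Garnier system G(1,2,2) is a quantum canonical transformation: suppose x1 is a unit of R, and define q1 = x1^{-1}, p1 = −x1^2y1 − α2·x1 − y2 + 1, q2 = x1^{-1} + x2, p2 = y2. Then (q1, p1, q2, p2) again satisfy the canonical commutation relations: [q1,p1] = [q2,p2] = h and [q1,q2] = [p1,p2] = [q1,p2] = [q2,p1] = 0. -/
/-!
Conjugating by `x1` shows that `x1⁻¹` commutes with everything that commutes with `x1`, and that
`[x1⁻¹, y1] = -h x1⁻²`. Since `[x1⁻¹, ·]` is a derivation, `[x1⁻¹, x1² y1] = -h`, which gives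
`[q1, p1] = h`; similarly `[x2, p1] = -[x2, y2] = -h`, so `[q2, p1] = h - h = 0`. The remaining
relations are commutations of monomials in pairwise commuting generators.
-/

theorem Ring.lie_mul_s14 {R : Type*} [Ring R] (a b c : R) :
    ⁅a, b * c⁆ = ⁅a, b⁆ * c + b * ⁅a, c⁆ := by
  simp only [Ring.lie_def]; noncomm_ring

namespace Units

variable {R : Type*} [Ring R]

theorem lie_inv_left (u : Rˣ) (y : R) :
    ⁅(↑u⁻¹ : R), y⁆ = -(↑u⁻¹ * ⁅(u : R), y⁆ * ↑u⁻¹) := by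
  simp only [Ring.lie_def, mul_sub, sub_mul, mul_assoc, inv_mul_cancel_left, mul_inv, mul_one,
    neg_sub]

theorem lie_inv_sq_mul (u : Rˣ) {y c : R} (hc : ∀ r, c * r = r * c) (huy : ⁅(u : R), y⁆ = c) :
    ⁅(↑u⁻¹ : R), (u : R) ^ 2 * y⁆ = -c := by
  have hu : ⁅(↑u⁻¹ : R), (u : R) ^ 2⁆ = 0 :=
    ((Commute.refl (u : R)).units_inv_left.pow_right 2).lie_eq
  have hy : ⁅(↑u⁻¹ : R), y⁆ = -(c * ↑u⁻¹ ^ 2) := by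
    rw [lie_inv_left, huy, ← hc, mul_assoc, sq]
  have hu2 : (u : R) ^ 2 * ↑u⁻¹ ^ 2 = 1 := by
    rw [← val_pow_eq_pow_val, ← val_pow_eq_pow_val, ← val_mul, inv_pow, mul_inv_cancel, val_one]
  rw [Ring.lie_mul_s14, hu, hy, zero_mul, zero_add, mul_neg, ← mul_assoc, ← hc, mul_assoc, hu2,
    mul_one]

end Units

/-- The transformation r2 of the quantum degenerate Garnier system G(1,2,2) is a
quantum canonical transformation. -/
theorem quantum_garnier_G122_r2_canonical
    {R : Type*} [Ring R]
    (h α2 : R)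
    (hh : ∀ r : R, h * r = r * h)
    (hA2 : ∀ r : R, α2 * r = r * α2)
    (x1 y1 x2 y2 : R)
    (hx1y1 : x1 * y1 - y1 * x1 = h)
    (hx2y2 : x2 * y2 - y2 * x2 = h)
    (hx1x2 : x1 * x2 - x2 * x1 = 0)
    (hy1y2 : y1 * y2 - y2 * y1 = 0)
    (hx1y2 : x1 * y2 - y2 * x1 = 0)
    (hx2y1 : x2 * y1 - y1 * x2 = 0)
    (x1i : R) (hx1il : x1i * x1 = 1) (hx1ir : x1 * x1i = 1)
    (q1 p1 q2 p2 : R)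
    (hq1 : q1 = x1i)
    (hp1 : p1 = -(x1^2 * y1) - α2 * x1 - y2 + 1)
    (hq2 : q2 = x1i + x2)
    (hp2 : p2 = y2) :
    q1 * p1 - p1 * q1 = h ∧ q2 * p2 - p2 * q2 = h ∧
    q1 * q2 - q2 * q1 = 0 ∧ p1 * p2 - p2 * p1 = 0 ∧
    q1 * p2 - p2 * q1 = 0 ∧ q2 * p1 - p1 * q2 = 0 := by
  -- Mathlib makes the Lie ring laws of the ring commutator (`lie_add`, ...) available only locally.
  let _ : LieRing R := LieRing.ofAssociativeRing
  let u : Rˣ := ⟨x1, x1i, hx1ir, hx1il⟩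
  simp only [← Ring.lie_def, ← commute_iff_lie_eq] at *
  subst q1 p1 q2 p2
  have hα2 : ∀ r, Commute α2 r := hA2
  have x1i_x1 : Commute x1i x1 := (Commute.refl u.val).units_inv_left
  have x1i_x2 : Commute x1i x2 := hx1x2.units_inv_left (u := u)
  have x1i_y2 : Commute x1i y2 := hx1y2.units_inv_left (u := u)
  have lie_x1i_x1sq_y1 : ⁅x1i, x1 ^ 2 * y1⁆ = -h := u.lie_inv_sq_mul hh hx1y1
  have lie_p1 : ∀ a : R, ⁅a, -(x1 ^ 2 * y1) - α2 * x1 - y2 + 1⁆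
      = -⁅a, x1 ^ 2 * y1⁆ - ⁅a, α2 * x1⁆ - ⁅a, y2⁆ := fun a => by
    rw [lie_add, lie_sub, lie_sub, lie_neg, (Commute.one_right a).lie_eq, add_zero]
  have lie_x1i_p1 : ⁅x1i, -(x1 ^ 2 * y1) - α2 * x1 - y2 + 1⁆ = h := by
    rw [lie_p1, lie_x1i_x1sq_y1, ((hα2 x1i).symm.mul_right x1i_x1).lie_eq, x1i_y2.lie_eq]
    abel
  have lie_x2_p1 : ⁅x2, -(x1 ^ 2 * y1) - α2 * x1 - y2 + 1⁆ = -h := by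
    rw [lie_p1, ((hx1x2.symm.pow_right 2).mul_right hx2y1).lie_eq,
      ((hα2 x2).symm.mul_right hx1x2.symm).lie_eq, hx2y2]
    abel
  refine ⟨lie_x1i_p1, ?_, (Commute.refl x1i).add_right x1i_x2, ?_, x1i_y2, ?_⟩
  · rw [add_lie, x1i_y2.lie_eq, hx2y2, zero_add]
  · exact ((((hx1y2.pow_left 2).mul_left hy1y2).neg_left.sub_left
      ((hα2 y2).mul_left hx1y2)).sub_left (Commute.refl y2)).add_left (Commute.one_left y2)
  · rw [commute_iff_lie_eq, add_lie, lie_x1i_p1, lie_x2_p1, add_neg_cancel]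
end

section
/- The transformation r4 of the quantum degenerate Garnier system G(2,3) is a quantum canonical transformation: suppose x1 and x2 are units of R, and define q1 = x1^{-1}, p1 = −x1^2y1 − x1x2y2 − (α1+α2)·x1 − η·t1·x1x2^{-1}, q2 = x2x1^{-1}, p2 = −η·t1·x1^2x2^{-2} + η·t1·x1x2^{-2} + x1y2 + α2·x1x2^{-1}. Then (q1, p1, q2, p2) again satisfy the canonical commutation relations: [q1,p1] = [q2,p2] = h and [q1,q2] = [p1,p2] = [q1,p2] = [q2,p1] = 0. -/
private lemma nest_eq {R : Type*} [Ring R] {a b c d : R} (hbase : a * b = c * d)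
    (r : R) : a * (b * r) = c * (d * r) := by
  rw [← mul_assoc, hbase, mul_assoc]

private lemma nest_one {R : Type*} [Ring R] {a b : R} (hbase : a * b = 1)
    (r : R) : a * (b * r) = r := by
  rw [← mul_assoc, hbase, one_mul]

private lemma nest_sub {R : Type*} [Ring R] {a b c d e : R} (hbase : a * b = c * d - e)
    (r : R) : a * (b * r) = c * (d * r) - e * r := by
  rw [← mul_assoc, hbase, sub_mul, mul_assoc]

private lemma nest_add3 {R : Type*} [Ring R] {a b c d e f g : R}
    (hbase : a * b = c * d + e * (f * g)) (r : R) :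
    a * (b * r) = c * (d * r) + e * (f * (g * r)) := by
  rw [← mul_assoc, hbase, add_mul, mul_assoc, mul_assoc, mul_assoc]

private lemma swap_inv {R : Type*} [Ring R] {a b bi : R} (h1 : bi * b = 1)
    (h2 : b * bi = 1) (hc : a * b = b * a) : bi * a = a * bi := by
  have hba : b * (a * bi) = a := by rw [← mul_assoc, ← hc, mul_assoc, h2, mul_one]
  calc bi * a = bi * (b * (a * bi)) := by rw [hba]
    _ = (bi * b) * (a * bi) := by rw [mul_assoc]
    _ = a * bi := by rw [h1, one_mul]

private lemma weyl_inv {R : Type*} [Ring R] {a y ai h : R} (hc : ∀ r : R, h * r = r * h)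
    (hw : a * y - y * a = h) (h1 : ai * a = 1) (h2 : a * ai = 1) :
    y * ai = ai * y + h * (ai * ai) := by
  have hay : a * y = y * a + h := by rw [← hw]; noncomm_ring
  calc y * ai = (ai * a) * (y * ai) := by rw [h1, one_mul]
    _ = ai * ((a * y) * ai) := by rw [mul_assoc ai a (y * ai), ← mul_assoc a y ai]
    _ = ai * ((y * a + h) * ai) := by rw [hay]
    _ = ai * (y * (a * ai)) + ai * (h * ai) := by rw [add_mul, mul_add, mul_assoc y a ai]
    _ = ai * y + h * (ai * ai) := by
        rw [h2, mul_one, ← mul_assoc, ← hc ai, mul_assoc]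

/-- The transformation r4 of the quantum degenerate Garnier system G(2,3) is a
quantum canonical transformation. -/
theorem quantum_garnier_G23_r4_canonical
    {R : Type*} [Ring R]
    (h η α1 α2 t1 : R)
    (hh : ∀ r : R, h * r = r * h)
    (hη : ∀ r : R, η * r = r * η)
    (hA1 : ∀ r : R, α1 * r = r * α1)
    (hA2 : ∀ r : R, α2 * r = r * α2)
    (ht1 : ∀ r : R, t1 * r = r * t1)
    (x1 y1 x2 y2 : R)
    (hx1y1 : x1 * y1 - y1 * x1 = h)
    (hx2y2 : x2 * y2 - y2 * x2 = h)
    (hx1x2 : x1 * x2 - x2 * x1 = 0)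
    (hy1y2 : y1 * y2 - y2 * y1 = 0)
    (hx1y2 : x1 * y2 - y2 * x1 = 0)
    (hx2y1 : x2 * y1 - y1 * x2 = 0)
    (x1i : R) (hx1il : x1i * x1 = 1) (hx1ir : x1 * x1i = 1)
    (x2i : R) (hx2il : x2i * x2 = 1) (hx2ir : x2 * x2i = 1)
    (q1 p1 q2 p2 : R)
    (hq1 : q1 = x1i)
    (hp1 : p1 = -(x1^2 * y1) - x1 * x2 * y2 - (α1 + α2) * x1 - η * t1 * x1 * x2i)
    (hq2 : q2 = x2 * x1i)
    (hp2 : p2 = -(η * t1 * x1^2 * x2i^2) + η * t1 * x1 * x2i^2 + x1 * y2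
      + α2 * x1 * x2i) :
    q1 * p1 - p1 * q1 = h ∧ q2 * p2 - p2 * q2 = h ∧
    q1 * q2 - q2 * q1 = 0 ∧ p1 * p2 - p2 * p1 = 0 ∧
    q1 * p2 - p2 * q1 = 0 ∧ q2 * p1 - p1 * q2 = 0 := by
  -- basic reorderings of out-of-order generator pairs
  have e_x1x2 : x1 * x2 = x2 * x1 := sub_eq_zero.mp hx1x2
  have e_x2_x1 : x2 * x1 = x1 * x2 := e_x1x2.symm
  have e_y2_x1 : y2 * x1 = x1 * y2 := (sub_eq_zero.mp hx1y2).symm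
  have e_y1_x2 : y1 * x2 = x2 * y1 := (sub_eq_zero.mp hx2y1).symm
  have e_y2_y1 : y2 * y1 = y1 * y2 := (sub_eq_zero.mp hy1y2).symm
  have e_y1_x1 : y1 * x1 = x1 * y1 - h := by rw [← hx1y1]; noncomm_ring
  have e_y2_x2 : y2 * x2 = x2 * y2 - h := by rw [← hx2y2]; noncomm_ring
  have s_x1i_x2 : x1i * x2 = x2 * x1i := swap_inv hx1il hx1ir e_x2_x1
  have e_x2_x1i : x2 * x1i = x1i * x2 := s_x1i_x2.symm
  have e_x2i_x1 : x2i * x1 = x1 * x2i := swap_inv hx2il hx2ir e_x1x2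
  have e_x2i_x1i : x2i * x1i = x1i * x2i := swap_inv hx2il hx2ir s_x1i_x2
  have e_y1_x2i : y1 * x2i = x2i * y1 := (swap_inv hx2il hx2ir e_y1_x2).symm
  have e_y2_x1i : y2 * x1i = x1i * y2 := (swap_inv hx1il hx1ir e_y2_x1).symm
  have e_y1_x1i : y1 * x1i = x1i * y1 + h * (x1i * x1i) := weyl_inv hh hx1y1 hx1il hx1ir
  have e_y2_x2i : y2 * x2i = x2i * y2 + h * (x2i * x2i) := weyl_inv hh hx2y2 hx2il hx2ir
  -- nested versions
  have n_x2_x1 : ∀ r : R, x2 * (x1 * r) = x1 * (x2 * r) := fun r => nest_eq e_x2_x1 r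
  have n_y2_x1 : ∀ r : R, y2 * (x1 * r) = x1 * (y2 * r) := fun r => nest_eq e_y2_x1 r
  have n_y1_x2 : ∀ r : R, y1 * (x2 * r) = x2 * (y1 * r) := fun r => nest_eq e_y1_x2 r
  have n_y2_y1 : ∀ r : R, y2 * (y1 * r) = y1 * (y2 * r) := fun r => nest_eq e_y2_y1 r
  have n_x2_x1i : ∀ r : R, x2 * (x1i * r) = x1i * (x2 * r) := fun r => nest_eq e_x2_x1i r
  have n_x2i_x1 : ∀ r : R, x2i * (x1 * r) = x1 * (x2i * r) := fun r => nest_eq e_x2i_x1 r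
  have n_x2i_x1i : ∀ r : R, x2i * (x1i * r) = x1i * (x2i * r) := fun r => nest_eq e_x2i_x1i r
  have n_y1_x2i : ∀ r : R, y1 * (x2i * r) = x2i * (y1 * r) := fun r => nest_eq e_y1_x2i r
  have n_y2_x1i : ∀ r : R, y2 * (x1i * r) = x1i * (y2 * r) := fun r => nest_eq e_y2_x1i r
  have n_y1_x1 : ∀ r : R, y1 * (x1 * r) = x1 * (y1 * r) - h * r := fun r => nest_sub e_y1_x1 r
  have n_y2_x2 : ∀ r : R, y2 * (x2 * r) = x2 * (y2 * r) - h * r := fun r => nest_sub e_y2_x2 r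
  have n_y1_x1i : ∀ r : R, y1 * (x1i * r) = x1i * (y1 * r) + h * (x1i * (x1i * r)) :=
    fun r => nest_add3 e_y1_x1i r
  have n_y2_x2i : ∀ r : R, y2 * (x2i * r) = x2i * (y2 * r) + h * (x2i * (x2i * r)) :=
    fun r => nest_add3 e_y2_x2i r
  have n_x1_x1i : ∀ r : R, x1 * (x1i * r) = r := fun r => nest_one hx1ir r
  have n_x1i_x1 : ∀ r : R, x1i * (x1 * r) = r := fun r => nest_one hx1il r
  have n_x2_x2i : ∀ r : R, x2 * (x2i * r) = r := fun r => nest_one hx2ir r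
  have n_x2i_x2 : ∀ r : R, x2i * (x2 * r) = r := fun r => nest_one hx2il r
  -- scalar moves
  have m_x1_h : x1 * h = h * x1 := (hh x1).symm
  have n_x1_h : ∀ r : R, x1 * (h * r) = h * (x1 * r) := fun r => nest_eq m_x1_h r
  have m_x1_η : x1 * η = η * x1 := (hη x1).symm
  have n_x1_η : ∀ r : R, x1 * (η * r) = η * (x1 * r) := fun r => nest_eq m_x1_η r
  have m_x1_α1 : x1 * α1 = α1 * x1 := (hA1 x1).symm
  have n_x1_α1 : ∀ r : R, x1 * (α1 * r) = α1 * (x1 * r) := fun r => nest_eq m_x1_α1 r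
  have m_x1_α2 : x1 * α2 = α2 * x1 := (hA2 x1).symm
  have n_x1_α2 : ∀ r : R, x1 * (α2 * r) = α2 * (x1 * r) := fun r => nest_eq m_x1_α2 r
  have m_x1_t1 : x1 * t1 = t1 * x1 := (ht1 x1).symm
  have n_x1_t1 : ∀ r : R, x1 * (t1 * r) = t1 * (x1 * r) := fun r => nest_eq m_x1_t1 r
  have m_x1i_h : x1i * h = h * x1i := (hh x1i).symm
  have n_x1i_h : ∀ r : R, x1i * (h * r) = h * (x1i * r) := fun r => nest_eq m_x1i_h r
  have m_x1i_η : x1i * η = η * x1i := (hη x1i).symm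
  have n_x1i_η : ∀ r : R, x1i * (η * r) = η * (x1i * r) := fun r => nest_eq m_x1i_η r
  have m_x1i_α1 : x1i * α1 = α1 * x1i := (hA1 x1i).symm
  have n_x1i_α1 : ∀ r : R, x1i * (α1 * r) = α1 * (x1i * r) := fun r => nest_eq m_x1i_α1 r
  have m_x1i_α2 : x1i * α2 = α2 * x1i := (hA2 x1i).symm
  have n_x1i_α2 : ∀ r : R, x1i * (α2 * r) = α2 * (x1i * r) := fun r => nest_eq m_x1i_α2 r
  have m_x1i_t1 : x1i * t1 = t1 * x1i := (ht1 x1i).symm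
  have n_x1i_t1 : ∀ r : R, x1i * (t1 * r) = t1 * (x1i * r) := fun r => nest_eq m_x1i_t1 r
  have m_x2_h : x2 * h = h * x2 := (hh x2).symm
  have n_x2_h : ∀ r : R, x2 * (h * r) = h * (x2 * r) := fun r => nest_eq m_x2_h r
  have m_x2_η : x2 * η = η * x2 := (hη x2).symm
  have n_x2_η : ∀ r : R, x2 * (η * r) = η * (x2 * r) := fun r => nest_eq m_x2_η r
  have m_x2_α1 : x2 * α1 = α1 * x2 := (hA1 x2).symm
  have n_x2_α1 : ∀ r : R, x2 * (α1 * r) = α1 * (x2 * r) := fun r => nest_eq m_x2_α1 r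
  have m_x2_α2 : x2 * α2 = α2 * x2 := (hA2 x2).symm
  have n_x2_α2 : ∀ r : R, x2 * (α2 * r) = α2 * (x2 * r) := fun r => nest_eq m_x2_α2 r
  have m_x2_t1 : x2 * t1 = t1 * x2 := (ht1 x2).symm
  have n_x2_t1 : ∀ r : R, x2 * (t1 * r) = t1 * (x2 * r) := fun r => nest_eq m_x2_t1 r
  have m_x2i_h : x2i * h = h * x2i := (hh x2i).symm
  have n_x2i_h : ∀ r : R, x2i * (h * r) = h * (x2i * r) := fun r => nest_eq m_x2i_h r
  have m_x2i_η : x2i * η = η * x2i := (hη x2i).symm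
  have n_x2i_η : ∀ r : R, x2i * (η * r) = η * (x2i * r) := fun r => nest_eq m_x2i_η r
  have m_x2i_α1 : x2i * α1 = α1 * x2i := (hA1 x2i).symm
  have n_x2i_α1 : ∀ r : R, x2i * (α1 * r) = α1 * (x2i * r) := fun r => nest_eq m_x2i_α1 r
  have m_x2i_α2 : x2i * α2 = α2 * x2i := (hA2 x2i).symm
  have n_x2i_α2 : ∀ r : R, x2i * (α2 * r) = α2 * (x2i * r) := fun r => nest_eq m_x2i_α2 r
  have m_x2i_t1 : x2i * t1 = t1 * x2i := (ht1 x2i).symm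
  have n_x2i_t1 : ∀ r : R, x2i * (t1 * r) = t1 * (x2i * r) := fun r => nest_eq m_x2i_t1 r
  have m_y1_h : y1 * h = h * y1 := (hh y1).symm
  have n_y1_h : ∀ r : R, y1 * (h * r) = h * (y1 * r) := fun r => nest_eq m_y1_h r
  have m_y1_η : y1 * η = η * y1 := (hη y1).symm
  have n_y1_η : ∀ r : R, y1 * (η * r) = η * (y1 * r) := fun r => nest_eq m_y1_η r
  have m_y1_α1 : y1 * α1 = α1 * y1 := (hA1 y1).symm
  have n_y1_α1 : ∀ r : R, y1 * (α1 * r) = α1 * (y1 * r) := fun r => nest_eq m_y1_α1 r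
  have m_y1_α2 : y1 * α2 = α2 * y1 := (hA2 y1).symm
  have n_y1_α2 : ∀ r : R, y1 * (α2 * r) = α2 * (y1 * r) := fun r => nest_eq m_y1_α2 r
  have m_y1_t1 : y1 * t1 = t1 * y1 := (ht1 y1).symm
  have n_y1_t1 : ∀ r : R, y1 * (t1 * r) = t1 * (y1 * r) := fun r => nest_eq m_y1_t1 r
  have m_y2_h : y2 * h = h * y2 := (hh y2).symm
  have n_y2_h : ∀ r : R, y2 * (h * r) = h * (y2 * r) := fun r => nest_eq m_y2_h r
  have m_y2_η : y2 * η = η * y2 := (hη y2).symm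
  have n_y2_η : ∀ r : R, y2 * (η * r) = η * (y2 * r) := fun r => nest_eq m_y2_η r
  have m_y2_α1 : y2 * α1 = α1 * y2 := (hA1 y2).symm
  have n_y2_α1 : ∀ r : R, y2 * (α1 * r) = α1 * (y2 * r) := fun r => nest_eq m_y2_α1 r
  have m_y2_α2 : y2 * α2 = α2 * y2 := (hA2 y2).symm
  have n_y2_α2 : ∀ r : R, y2 * (α2 * r) = α2 * (y2 * r) := fun r => nest_eq m_y2_α2 r
  have m_y2_t1 : y2 * t1 = t1 * y2 := (ht1 y2).symm
  have n_y2_t1 : ∀ r : R, y2 * (t1 * r) = t1 * (y2 * r) := fun r => nest_eq m_y2_t1 r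
  have ms_η_h : η * h = h * η := (hh η).symm
  have ns_η_h : ∀ r : R, η * (h * r) = h * (η * r) := fun r => nest_eq ms_η_h r
  have ms_t1_h : t1 * h = h * t1 := (hh t1).symm
  have ns_t1_h : ∀ r : R, t1 * (h * r) = h * (t1 * r) := fun r => nest_eq ms_t1_h r
  have ms_t1_η : t1 * η = η * t1 := (hη t1).symm
  have ns_t1_η : ∀ r : R, t1 * (η * r) = η * (t1 * r) := fun r => nest_eq ms_t1_η r
  have ms_α1_h : α1 * h = h * α1 := (hh α1).symm
  have ns_α1_h : ∀ r : R, α1 * (h * r) = h * (α1 * r) := fun r => nest_eq ms_α1_h r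
  have ms_α1_η : α1 * η = η * α1 := (hη α1).symm
  have ns_α1_η : ∀ r : R, α1 * (η * r) = η * (α1 * r) := fun r => nest_eq ms_α1_η r
  have ms_α1_t1 : α1 * t1 = t1 * α1 := (ht1 α1).symm
  have ns_α1_t1 : ∀ r : R, α1 * (t1 * r) = t1 * (α1 * r) := fun r => nest_eq ms_α1_t1 r
  have ms_α2_h : α2 * h = h * α2 := (hh α2).symm
  have ns_α2_h : ∀ r : R, α2 * (h * r) = h * (α2 * r) := fun r => nest_eq ms_α2_h r
  have ms_α2_η : α2 * η = η * α2 := (hη α2).symm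
  have ns_α2_η : ∀ r : R, α2 * (η * r) = η * (α2 * r) := fun r => nest_eq ms_α2_η r
  have ms_α2_t1 : α2 * t1 = t1 * α2 := (ht1 α2).symm
  have ns_α2_t1 : ∀ r : R, α2 * (t1 * r) = t1 * (α2 * r) := fun r => nest_eq ms_α2_t1 r
  have ms_α2_α1 : α2 * α1 = α1 * α2 := (hA1 α2).symm
  have ns_α2_α1 : ∀ r : R, α2 * (α1 * r) = α1 * (α2 * r) := fun r => nest_eq ms_α2_α1 r
  refine ⟨?_, ?_, ?_, ?_, ?_, ?_⟩ <;>
  · simp only [hq1, hp1, hq2, hp2, pow_two, mul_assoc, mul_add, add_mul, mul_sub,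
      sub_mul, mul_one, one_mul, mul_neg, neg_mul, neg_neg, neg_add, neg_sub,
      hx1il, hx1ir, hx2il, hx2ir,
      e_x2_x1, e_y2_x1, e_y1_x2, e_y2_y1, e_x2_x1i, e_x2i_x1, e_x2i_x1i,
      e_y1_x2i, e_y2_x1i, e_y1_x1, e_y2_x2, e_y1_x1i, e_y2_x2i,
      n_x2_x1, n_y2_x1, n_y1_x2, n_y2_y1, n_x2_x1i, n_x2i_x1, n_x2i_x1i,
      n_y1_x2i, n_y2_x1i, n_y1_x1, n_y2_x2, n_y1_x1i, n_y2_x2i,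
      n_x1_x1i, n_x1i_x1, n_x2_x2i, n_x2i_x2,
      m_x1_h, n_x1_h, m_x1_η, n_x1_η, m_x1_α1, n_x1_α1, m_x1_α2, n_x1_α2, m_x1_t1, n_x1_t1, m_x1i_h, n_x1i_h, m_x1i_η, n_x1i_η, m_x1i_α1, n_x1i_α1, m_x1i_α2, n_x1i_α2, m_x1i_t1, n_x1i_t1, m_x2_h, n_x2_h, m_x2_η, n_x2_η, m_x2_α1, n_x2_α1, m_x2_α2, n_x2_α2, m_x2_t1, n_x2_t1, m_x2i_h, n_x2i_h, m_x2i_η, n_x2i_η, m_x2i_α1, n_x2i_α1, m_x2i_α2, n_x2i_α2, m_x2i_t1, n_x2i_t1, m_y1_h, n_y1_h, m_y1_η, n_y1_η, m_y1_α1, n_y1_α1, m_y1_α2, n_y1_α2, m_y1_t1, n_y1_t1, m_y2_h, n_y2_h, m_y2_η, n_y2_η, m_y2_α1, n_y2_α1, m_y2_α2, n_y2_α2, m_y2_t1, n_y2_t1, ms_η_h, ns_η_h, ms_t1_h, ns_t1_h, ms_t1_η, ns_t1_η, ms_α1_h, ns_α1_h, ms_α1_η, ns_α1_η, ms_α1_t1,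 ns_α1_t1, ms_α2_h, ns_α2_h, ms_α2_η, ns_α2_η, ms_α2_t1, ns_α2_t1, ms_α2_α1, ns_α2_α1]
    noncomm_ring
end
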